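/- arXiv:1703.07303 — 3 statements merged into one kernel-verified Lean document; each statement's English description precedes it below -/
import Mathlib

section
/- For integers n ≥ 1 and a real s ∈ (0,1], the star discrepancy of the point set {(k₁/(ns), k₂/n, k₃/n) : 1 ≤ k₁ ≤ ⌊ns⌋, 1 ≤ k₂, k₃ ≤ n} in [0,1]³ is bounded above by (4n² + 3n + 1)/((ns−1)n²), provided ns > 1. -/
open scoped ENNReal BigOperators
open Filter MeasureTheory

/-- The star discrepancy of the point family `x` indexed by the finite set `P`,
in dimension `q`. -/
noncomputable def starDisc (q : ℕ) {ι : Type*} (P : Finset ι)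
    (x : ι → (Fin q → ℝ)) : ℝ :=
  sSup { d | ∃ u : Fin q → ℝ, (∀ j, 0 ≤ u j ∧ u j ≤ 1) ∧
    d = |((P.filter (fun i => ∀ j, x i j < u j)).card : ℝ) / (P.card : ℝ) - ∏ j, u j| }

lemma countLem (M : ℕ) (c : ℝ) (hc : 0 < c) (u : ℝ) :
    ((Finset.Icc 1 M).filter (fun k : ℕ => (k:ℝ)/c < u)).card = min M (⌈c*u⌉₊ - 1) := by
  have h : (Finset.Icc 1 M).filter (fun k : ℕ => (k:ℝ)/c < u)
      = Finset.Icc 1 (min M (⌈c*u⌉₊ - 1)) := by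
    ext k
    have hk : ((k:ℝ)/c < u) ↔ k < ⌈c*u⌉₊ := by
      rw [div_lt_iff₀ hc, mul_comm]; exact (Nat.lt_ceil).symm
    simp only [Finset.mem_filter, Finset.mem_Icc, hk]
    omega
  rw [h, Nat.card_Icc]; omega

lemma estLem (M : ℕ) (hM : 1 ≤ M) (c : ℝ) (hc : 0 < c) (hMc : (M:ℝ) ≤ c) (hcM : c ≤ M + 1)
    (u : ℝ) (hu0 : 0 ≤ u) (hu1 : u ≤ 1) :
    |((min M (⌈c*u⌉₊ - 1) : ℕ) : ℝ)/M - u| ≤ (1 + (c - M))/M := by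
  have hMpos : (0:ℝ) < M := by exact_mod_cast hM
  have hcu0 : 0 ≤ c * u := mul_nonneg hc.le hu0
  set b := ⌈c*u⌉₊ with hbdef
  rcases Nat.eq_zero_or_pos b with hb0 | hbpos
  · have hu0' : u = 0 := by
      have : c * u ≤ 0 := Nat.ceil_eq_zero.mp hb0
      nlinarith
    subst hu0'
    simp only [hb0]
    rw [Nat.zero_sub, Nat.min_zero]
    simp only [Nat.cast_zero, zero_div, sub_zero, abs_zero]
    exact div_nonneg (by linarith) hMpos.le
  · have hb1 : c * u ≤ (b:ℝ) := Nat.le_ceil _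
    have hb2 : (b:ℝ) < c * u + 1 := Nat.ceil_lt_add_one hcu0
    rcases le_or_gt (b - 1) M with h | h
    · -- A = b - 1
      rw [min_eq_right h]
      have hcast : ((b - 1 : ℕ) : ℝ) = (b:ℝ) - 1 := by
        rw [Nat.cast_sub hbpos]; norm_num
      rw [hcast]
      have heq : ((b:ℝ) - 1)/M - u = (((b:ℝ) - 1) - M*u)/M := by field_simp
      rw [heq, abs_div, abs_of_pos hMpos]
      gcongr
      rw [abs_le]
      constructor <;> nlinarith
    · -- A = M
      rw [min_eq_left h.le]
      have hMb : (M:ℝ) + 2 ≤ (b:ℝ) := by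
        have : M + 2 ≤ b := by omega
        exact_mod_cast this
      have hcu : (M:ℝ) + 1 ≤ c * u := by linarith
      rw [div_self hMpos.ne', abs_of_nonneg (by linarith)]
      rw [le_div_iff₀ hMpos]
      nlinarith [mul_nonneg (sub_nonneg.2 hMc) (sub_nonneg.2 hu1)]
lemma prod3Lem (a₁ a₂ a₃ b₁ b₂ b₃ : ℝ)
    (ha₁ : 0 ≤ a₁) (ha₁' : a₁ ≤ 1) (ha₂ : 0 ≤ a₂) (ha₂' : a₂ ≤ 1)
    (ha₃ : 0 ≤ a₃) (ha₃' : a₃ ≤ 1)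
    (hb₁ : 0 ≤ b₁) (hb₁' : b₁ ≤ 1) (hb₂ : 0 ≤ b₂) (hb₂' : b₂ ≤ 1)
    (hb₃ : 0 ≤ b₃) (hb₃' : b₃ ≤ 1) :
    |a₁*a₂*a₃ - b₁*b₂*b₃| ≤ |a₁-b₁| + |a₂-b₂| + |a₃-b₃| := by
  have key : a₁*a₂*a₃ - b₁*b₂*b₃
      = (a₁-b₁)*(a₂*a₃) + b₁*((a₂-b₂)*a₃) + b₁*b₂*(a₃-b₃) := by ring
  rw [key]
  have h1 : |(a₁-b₁)*(a₂*a₃)| ≤ |a₁-b₁| := by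
    rw [abs_mul]
    apply mul_le_of_le_one_right (abs_nonneg _)
    rw [abs_of_nonneg (by positivity)]
    exact mul_le_one₀ ha₂' ha₃ ha₃'
  have h2 : |b₁*((a₂-b₂)*a₃)| ≤ |a₂-b₂| := by
    rw [abs_mul, abs_mul]
    calc |b₁| * (|a₂-b₂| * |a₃|) ≤ 1 * (|a₂-b₂| * 1) := by
          apply mul_le_mul (by rw [abs_of_nonneg hb₁]; exact hb₁')
          · exact mul_le_mul_of_nonneg_left (by rw [abs_of_nonneg ha₃]; exact ha₃')
              (abs_nonneg _)
          · positivity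
          · norm_num
      _ = |a₂-b₂| := by ring
  have h3 : |b₁*b₂*(a₃-b₃)| ≤ |a₃-b₃| := by
    rw [abs_mul]
    apply mul_le_of_le_one_left (abs_nonneg _)
    rw [abs_mul]
    calc |b₁| * |b₂| ≤ 1*1 := by
          apply mul_le_mul _ _ (abs_nonneg _) (by norm_num)
          · rw [abs_of_nonneg hb₁]; exact hb₁'
          · rw [abs_of_nonneg hb₂]; exact hb₂'
      _ = 1 := by norm_num
  calc |(a₁-b₁)*(a₂*a₃) + b₁*((a₂-b₂)*a₃) + b₁*b₂*(a₃-b₃)|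
      ≤ |(a₁-b₁)*(a₂*a₃) + b₁*((a₂-b₂)*a₃)| + |b₁*b₂*(a₃-b₃)| := abs_add_le _ _
    _ ≤ |(a₁-b₁)*(a₂*a₃)| + |b₁*((a₂-b₂)*a₃)| + |b₁*b₂*(a₃-b₃)| := by
        linarith [abs_add_le ((a₁-b₁)*(a₂*a₃)) (b₁*((a₂-b₂)*a₃))]
    _ ≤ |a₁-b₁| + |a₂-b₂| + |a₃-b₃| := by linarith

/-- The star discrepancy of the grid `{(k₁/(ns), k₂/n, k₃/n)}` with
`1 ≤ k₁ ≤ ⌊ns⌋`, `1 ≤ k₂,k₃ ≤ n` is at most `(4n² + 3n + 1)/((ns−1)n²)`. -/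
theorem stmt0 (n : ℕ) (hn : 1 ≤ n) (s : ℝ) (hs : 0 < s) (hs1 : s ≤ 1)
    (hns : 1 < (n : ℝ) * s) :
    starDisc 3
      ((Finset.Icc 1 ⌊(n : ℝ) * s⌋₊) ×ˢ (Finset.Icc 1 n) ×ˢ (Finset.Icc 1 n))
      (fun k => ![(k.1 : ℝ) / ((n : ℝ) * s), (k.2.1 : ℝ) / n, (k.2.2 : ℝ) / n])
    ≤ (4 * (n : ℝ) ^ 2 + 3 * n + 1) / (((n : ℝ) * s - 1) * (n : ℝ) ^ 2) := by
  set m := ⌊(n : ℝ) * s⌋₊ with hmdef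
  have hn0 : (0:ℝ) < n := by exact_mod_cast hn
  have hns0 : (0:ℝ) < (n:ℝ) * s := by linarith
  have hm1 : 1 ≤ m := Nat.le_floor (by exact_mod_cast hns.le)
  have hmle : (m:ℝ) ≤ (n:ℝ) * s := Nat.floor_le hns0.le
  have hlt : (n:ℝ) * s < (m:ℝ) + 1 := Nat.lt_floor_add_one _
  have hm0 : (0:ℝ) < m := by exact_mod_cast hm1
  set t := (n:ℝ) * s - 1 with htdef
  have ht : 0 < t := by simp only [htdef]; linarith
  have htm : t ≤ m := by linarith
  have htn : t ≤ n := by nlinarith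
  have hRHS : (0:ℝ) ≤ (4 * (n : ℝ) ^ 2 + 3 * n + 1) / (t * (n : ℝ) ^ 2) := by
    apply div_nonneg (by positivity)
    positivity
  apply Real.sSup_le _ hRHS
  rintro d ⟨u, hu, rfl⟩
  -- rewrite the filtered set
  have hpred : ∀ i ∈ ((Finset.Icc 1 m) ×ˢ (Finset.Icc 1 n) ×ˢ (Finset.Icc 1 n)),
      ((∀ j : Fin 3,
        ![(i.1 : ℝ) / ((n : ℝ) * s), (i.2.1 : ℝ) / n, (i.2.2 : ℝ) / n] j < u j) ↔
        ((i.1 : ℝ) / ((n : ℝ) * s) < u 0 ∧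
          ((i.2.1 : ℝ) / (n:ℝ) < u 1 ∧ (i.2.2 : ℝ) / (n:ℝ) < u 2))) := by
    intro i _
    constructor
    · intro h; exact ⟨h 0, h 1, h 2⟩
    · rintro ⟨h0, h1, h2⟩ j; fin_cases j <;> simpa
  have hsplit : ((Finset.Icc 1 m) ×ˢ (Finset.Icc 1 n) ×ˢ (Finset.Icc 1 n)).filter
      (fun x : ℕ × ℕ × ℕ => (x.1:ℝ)/((n:ℝ)*s) < u 0 ∧
        ((x.2.1:ℝ)/(n:ℝ) < u 1 ∧ (x.2.2:ℝ)/(n:ℝ) < u 2))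
      = (Finset.Icc 1 m).filter (fun k : ℕ => (k:ℝ)/((n:ℝ)*s) < u 0) ×ˢ
        ((Finset.Icc 1 n).filter (fun k : ℕ => (k:ℝ)/(n:ℝ) < u 1) ×ˢ
         (Finset.Icc 1 n).filter (fun k : ℕ => (k:ℝ)/(n:ℝ) < u 2)) := by
    ext x
    simp only [Finset.mem_filter, Finset.mem_product]
    tauto
  rw [Finset.filter_congr hpred, hsplit]
  simp only [Finset.card_product]
  rw [countLem m ((n:ℝ)*s) hns0 (u 0), countLem n (n:ℝ) hn0 (u 1),
    countLem n (n:ℝ) hn0 (u 2)]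
  simp only [Nat.card_Icc, Nat.add_sub_cancel]
  set A₁ := min m (⌈(n:ℝ)*s*(u 0)⌉₊ - 1) with hA1
  set A₂ := min n (⌈(n:ℝ)*(u 1)⌉₊ - 1) with hA2
  set A₃ := min n (⌈(n:ℝ)*(u 2)⌉₊ - 1) with hA3
  have e₁ : |(A₁:ℝ)/m - u 0| ≤ (1 + ((n:ℝ)*s - m))/m :=
    estLem m hm1 ((n:ℝ)*s) hns0 hmle hlt.le (u 0) (hu 0).1 (hu 0).2
  have e₂ : |(A₂:ℝ)/n - u 1| ≤ 1/(n:ℝ) := by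
    simpa only [sub_self, add_zero] using
      estLem n hn (n:ℝ) hn0 le_rfl (by linarith) (u 1) (hu 1).1 (hu 1).2
  have e₃ : |(A₃:ℝ)/n - u 2| ≤ 1/(n:ℝ) := by
    simpa only [sub_self, add_zero] using
      estLem n hn (n:ℝ) hn0 le_rfl (by linarith) (u 2) (hu 2).1 (hu 2).2
  have hA₁le : (A₁:ℝ) ≤ m := by exact_mod_cast Nat.min_le_left _ _
  have hA₂le : (A₂:ℝ) ≤ n := by exact_mod_cast Nat.min_le_left _ _
  have hA₃le : (A₃:ℝ) ≤ n := by exact_mod_cast Nat.min_le_left _ _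
  have ha₁ : 0 ≤ (A₁:ℝ)/m := by positivity
  have ha₂ : 0 ≤ (A₂:ℝ)/n := by positivity
  have ha₃ : 0 ≤ (A₃:ℝ)/n := by positivity
  have ha₁' : (A₁:ℝ)/m ≤ 1 := by rw [div_le_one hm0]; exact hA₁le
  have ha₂' : (A₂:ℝ)/n ≤ 1 := by rw [div_le_one hn0]; exact hA₂le
  have ha₃' : (A₃:ℝ)/n ≤ 1 := by rw [div_le_one hn0]; exact hA₃le
  have hdiv : ((A₁ * (A₂ * A₃) : ℕ) : ℝ) / ((m * (n * n) : ℕ) : ℝ)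
      = ((A₁:ℝ)/m) * (((A₂:ℝ)/n) * ((A₃:ℝ)/n)) := by
    push_cast
    field_simp
  rw [hdiv, Fin.prod_univ_three]
  have key := prod3Lem ((A₁:ℝ)/m) ((A₂:ℝ)/n) ((A₃:ℝ)/n) (u 0) (u 1) (u 2)
    ha₁ ha₁' ha₂ ha₂' ha₃ ha₃' (hu 0).1 (hu 0).2 (hu 1).1 (hu 1).2 (hu 2).1 (hu 2).2
  have key' : |(A₁:ℝ)/m * ((A₂:ℝ)/n * ((A₃:ℝ)/n)) - u 0 * u 1 * u 2|
      ≤ |(A₁:ℝ)/m - u 0| + |(A₂:ℝ)/n - u 1| + |(A₃:ℝ)/n - u 2| := by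
    have : (A₁:ℝ)/m * ((A₂:ℝ)/n * ((A₃:ℝ)/n)) = (A₁:ℝ)/m * ((A₂:ℝ)/n) * ((A₃:ℝ)/n) := by
      ring
    rw [this]; exact key
  have step1 : (1 + ((n:ℝ)*s - m))/m ≤ 2/m := by
    gcongr
    linarith
  have step2 : (2:ℝ)/m ≤ 2/t := by gcongr
  have step3 : (1:ℝ)/n ≤ 1/t := by gcongr
  have step4 : (4:ℝ)/t ≤ (4 * (n : ℝ) ^ 2 + 3 * n + 1) / (t * (n : ℝ) ^ 2) := by
    rw [div_le_div_iff₀ ht (by positivity)]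
    nlinarith [mul_nonneg (by positivity : (0:ℝ) ≤ 3*(n:ℝ)+1) ht.le]
  calc |(A₁:ℝ)/m * ((A₂:ℝ)/n * ((A₃:ℝ)/n)) - u 0 * u 1 * u 2|
      ≤ |(A₁:ℝ)/m - u 0| + |(A₂:ℝ)/n - u 1| + |(A₃:ℝ)/n - u 2| := key'
    _ ≤ 2/m + 1/n + 1/n := by linarith
    _ ≤ 2/t + 1/t + 1/t := by linarith
    _ = 4/t := by ring
    _ ≤ (4 * (n : ℝ) ^ 2 + 3 * n + 1) / (t * (n : ℝ) ^ 2) := step4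
end

section
/- For all u₁,u₂,u₃ ∈ [0,1), s ∈ (0,1] and n ∈ ℕ with ns > 1, one has |⌊nsu₁⌋⌊nu₂⌋⌊nu₃⌋/(⌊ns⌋n²) − u₁u₂u₃| ≤ (4n² + 3n + 1)/((ns−1)n²). -/
open scoped ENNReal BigOperators
open Filter MeasureTheory

/-- Pointwise estimate: for `u₁,u₂,u₃ ∈ [0,1)`, `s ∈ (0,1]` and `ns > 1`,
`|⌊nsu₁⌋⌊nu₂⌋⌊nu₃⌋/(⌊ns⌋n²) − u₁u₂u₃| ≤ (4n²+3n+1)/((ns−1)n²)`. -/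
theorem stmt2 (n : ℕ) (s u₁ u₂ u₃ : ℝ)
    (hu₁ : 0 ≤ u₁) (hu₁' : u₁ < 1) (hu₂ : 0 ≤ u₂) (hu₂' : u₂ < 1)
    (hu₃ : 0 ≤ u₃) (hu₃' : u₃ < 1) (hs : 0 < s) (hs1 : s ≤ 1)
    (hns : 1 < (n : ℝ) * s) :
    |((⌊(n : ℝ) * s * u₁⌋₊ : ℝ) * ⌊(n : ℝ) * u₂⌋₊ * ⌊(n : ℝ) * u₃⌋₊) /
        ((⌊(n : ℝ) * s⌋₊ : ℝ) * (n : ℝ) ^ 2) - u₁ * u₂ * u₃|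
      ≤ (4 * (n : ℝ) ^ 2 + 3 * n + 1) / (((n : ℝ) * s - 1) * (n : ℝ) ^ 2) := by
  have hn0 : (0:ℝ) < n := by nlinarith
  set A := (⌊(n : ℝ) * s * u₁⌋₊ : ℝ) with hAdef
  set M := (⌊(n : ℝ) * s⌋₊ : ℝ) with hMdef
  set B := (⌊(n : ℝ) * u₂⌋₊ : ℝ) with hBdef
  set C := (⌊(n : ℝ) * u₃⌋₊ : ℝ) with hCdef
  have hMle : M ≤ (n:ℝ) * s := Nat.floor_le (by positivity)
  have hMgt : (n:ℝ) * s < M + 1 := Nat.lt_floor_add_one _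
  have hM0 : (0:ℝ) < M := by linarith
  have hA1 : A ≤ (n:ℝ) * s * u₁ := Nat.floor_le (by positivity)
  have hA2 : (n:ℝ) * s * u₁ < A + 1 := Nat.lt_floor_add_one _
  have hB1 : B ≤ (n:ℝ) * u₂ := Nat.floor_le (by positivity)
  have hB2 : (n:ℝ) * u₂ < B + 1 := Nat.lt_floor_add_one _
  have hC1 : C ≤ (n:ℝ) * u₃ := Nat.floor_le (by positivity)
  have hC2 : (n:ℝ) * u₃ < C + 1 := Nat.lt_floor_add_one _
  have hA0 : (0:ℝ) ≤ A := Nat.cast_nonneg _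
  have hB0 : (0:ℝ) ≤ B := Nat.cast_nonneg _
  have hC0 : (0:ℝ) ≤ C := Nat.cast_nonneg _
  have hAM : A ≤ M :=
    Nat.cast_le.mpr (Nat.floor_le_floor (by nlinarith))
  clear_value A M B C
  have hBn : B ≤ (n:ℝ) := by nlinarith
  have hCn : C ≤ (n:ℝ) := by nlinarith
  set x := A / M with hx
  set y := B / n with hy
  set z := C / n with hz
  have hx0 : 0 ≤ x := by rw [hx]; exact div_nonneg hA0 hM0.le
  have hx1 : x ≤ 1 := by rw [hx, div_le_one hM0]; exact hAM
  have hy0 : 0 ≤ y := by rw [hy]; exact div_nonneg hB0 hn0.le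
  have hy1 : y ≤ 1 := by rw [hy, div_le_one hn0]; exact hBn
  clear_value x y z
  have hz0 : 0 ≤ z := by rw [hz]; exact div_nonneg hC0 hn0.le
  have hz1 : z ≤ 1 := by rw [hz, div_le_one hn0]; exact hCn
  have keyA : |A - M * u₁| ≤ 1 := by
    rw [abs_le]
    constructor
    · have h1 := mul_le_mul_of_nonneg_right hMle hu₁
      linarith
    · have h1 := mul_le_mul_of_nonneg_right hMgt.le hu₁
      have h2 : (M + 1) * u₁ = M * u₁ + u₁ := by ring
      linarith
  have keyB : |B - (n:ℝ) * u₂| ≤ 1 := by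
    rw [abs_le]; constructor <;> linarith
  have keyC : |C - (n:ℝ) * u₃| ≤ 1 := by
    rw [abs_le]; constructor <;> linarith
  have hxu : |x - u₁| ≤ 1 / M := by
    have h : x - u₁ = (A - M * u₁) / M := by rw [hx]; field_simp
    rw [h, abs_div, abs_of_pos hM0]
    gcongr
  have hyu : |y - u₂| ≤ 1 / n := by
    have h : y - u₂ = (B - (n:ℝ) * u₂) / n := by rw [hy]; field_simp
    rw [h, abs_div, abs_of_pos hn0]
    gcongr
  have hzu : |z - u₃| ≤ 1 / n := by
    have h : z - u₃ = (C - (n:ℝ) * u₃) / n := by rw [hz]; field_simp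
    rw [h, abs_div, abs_of_pos hn0]
    gcongr
  have hrw : A * B * C / (M * (n:ℝ)^2) = x * y * z := by
    rw [hx, hy, hz, div_mul_div_comm, div_mul_div_comm]; ring_nf
  rw [hrw]
  have hdecomp : x * y * z - u₁ * u₂ * u₃
      = (x - u₁) * (y * z) + u₁ * ((y - u₂) * z) + (u₁ * u₂) * (z - u₃) := by ring
  have hyz : |y * z| ≤ 1 := by
    rw [abs_of_nonneg (mul_nonneg hy0 hz0)]; exact mul_le_one₀ hy1 hz0 hz1
  have hmain : |x * y * z - u₁ * u₂ * u₃| ≤ 1 / M + 1 / n + 1 / n := by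
    rw [hdecomp]
    refine (abs_add_three _ _ _).trans ?_
    have h1 : |(x - u₁) * (y * z)| ≤ 1 / M := by
      calc |(x - u₁) * (y * z)| = |x - u₁| * |y * z| := abs_mul _ _
        _ ≤ (1 / M) * 1 := mul_le_mul hxu hyz (abs_nonneg _) (one_div_pos.mpr hM0).le
        _ = 1 / M := mul_one _
    have h2 : |u₁ * ((y - u₂) * z)| ≤ 1 / n := by
      have hz' : |z| ≤ 1 := by rw [abs_of_nonneg hz0]; exact hz1
      calc |u₁ * ((y - u₂) * z)| = |u₁| * (|y - u₂| * |z|) := by rw [abs_mul, abs_mul]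
        _ ≤ 1 * ((1 / n) * 1) := by
            apply mul_le_mul (by rw [abs_of_nonneg hu₁]; linarith)
              (mul_le_mul hyu hz' (abs_nonneg _) (one_div_pos.mpr hn0).le)
              (mul_nonneg (abs_nonneg _) (abs_nonneg _)) zero_le_one
        _ = 1 / n := by ring
    have h3 : |(u₁ * u₂) * (z - u₃)| ≤ 1 / n := by
      have hu12 : |u₁ * u₂| ≤ 1 := by
        rw [abs_of_nonneg (mul_nonneg hu₁ hu₂)]; exact mul_le_one₀ hu₁'.le hu₂ hu₂'.le
      calc |(u₁ * u₂) * (z - u₃)| = |u₁ * u₂| * |z - u₃| := abs_mul _ _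
        _ ≤ 1 * (1 / n) := mul_le_mul hu12 hzu (abs_nonneg _) zero_le_one
        _ = 1 / n := one_mul _
    linarith
  refine hmain.trans ?_
  have hns1 : (0:ℝ) < (n:ℝ) * s - 1 := by linarith
  have hMb : 1 / M ≤ 1 / ((n:ℝ) * s - 1) := by
    apply one_div_le_one_div_of_le hns1; linarith
  have hnb : 1 / (n:ℝ) ≤ 1 / ((n:ℝ) * s - 1) := by
    apply one_div_le_one_div_of_le hns1
    have := mul_le_mul_of_nonneg_left hs1 hn0.le
    linarith
  have h5 : 3 / ((n:ℝ) * s - 1) ≤ (4 * (n:ℝ)^2 + 3 * n + 1) / (((n:ℝ) * s - 1) * (n:ℝ)^2) := by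
    rw [div_le_div_iff₀ hns1 (mul_pos hns1 (by positivity))]
    have h := mul_nonneg hns1.le (show (0:ℝ) ≤ (n:ℝ)^2 + 3*n + 1 by positivity)
    calc 3 * (((n:ℝ) * s - 1) * (n:ℝ)^2)
        ≤ 3 * (((n:ℝ) * s - 1) * (n:ℝ)^2) + ((n:ℝ) * s - 1) * ((n:ℝ)^2 + 3*n + 1) := by
          linarith
      _ = (4 * (n:ℝ)^2 + 3 * n + 1) * ((n:ℝ) * s - 1) := by ring
  have h6 : 3 / ((n:ℝ) * s - 1) = 1 / ((n:ℝ) * s - 1) + 1 / ((n:ℝ) * s - 1) + 1 / ((n:ℝ) * s - 1) := by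
    ring
  linarith
end

section
/- Let f, g : [0,1]^q → ℝ both have finite variation in the sense of Hardy and Krause and be bounded. Then the product fg has finite variation in the sense of Hardy and Krause on [0,1]^q. -/
open scoped ENNReal BigOperators
open Filter MeasureTheory

/-- The `q`-fold alternating sum of `f` over the box `[a,b]`. -/
def altSum {ι : Type*} [Fintype ι] [DecidableEq ι]
    (f : (ι → ℝ) → ℝ) (a b : ι → ℝ) : ℝ :=
  ∑ v : Finset ι, (-1 : ℝ) ^ v.card * f (fun j => if j ∈ v then a j else b j)

/-- A ladder (grid) on the box `[a,b]`. -/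
structure Ladder (ι : Type*) [Fintype ι] (a b : ι → ℝ) where
  m : ι → ℕ
  pts : ∀ j, Fin (m j + 1) → ℝ
  mono : ∀ j, Monotone (pts j)
  first : ∀ j, pts j 0 = a j
  last : ∀ j, pts j (Fin.last (m j)) = b j

/-- The variation sum of `f` over the cells of the ladder `L`. -/
noncomputable def Ladder.varSum {ι : Type*} [Fintype ι] [DecidableEq ι]
    {a b : ι → ℝ} (L : Ladder ι a b) (f : (ι → ℝ) → ℝ) : ℝ :=
  ∑ k : (∀ j, Fin (L.m j)),
    |altSum f (fun j => L.pts j (k j).castSucc) (fun j => L.pts j (k j).succ)|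

/-- The Vitali variation of `f` on the box `[a,b]`. -/
noncomputable def vitaliVar {ι : Type*} [Fintype ι] [DecidableEq ι]
    (f : (ι → ℝ) → ℝ) (a b : ι → ℝ) : ℝ≥0∞ :=
  ⨆ L : Ladder ι a b, ENNReal.ofReal (L.varSum f)

/-- Fix the coordinates outside `v` at the values given by `c`. -/
def fixOutside {ι : Type*} [DecidableEq ι] (v : Finset ι) (c : ι → ℝ)
    (g : (ι → ℝ) → ℝ) : ({j // j ∈ v} → ℝ) → ℝ :=
  fun x => g (fun j => if h : j ∈ v then x ⟨j, h⟩ else c j)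

/-- The Hardy–Krause variation of `f` on `[a,b]`, anchored at `b`. -/
noncomputable def hkVar {ι : Type*} [Fintype ι] [DecidableEq ι]
    (f : (ι → ℝ) → ℝ) (a b : ι → ℝ) : ℝ≥0∞ :=
  ∑ u ∈ Finset.univ.powerset.filter (fun u : Finset ι => u.Nonempty),
    vitaliVar (fixOutside u b f) (fun j => a (j : ι)) (fun j => b (j : ι))

open Finset

lemma real_sum_powerset_neg_one_pow_card {α : Type*} [DecidableEq α] {x : Finset α} :
    (∑ m ∈ x.powerset, (-1 : ℝ) ^ m.card) = if x = ∅ then 1 else 0 := by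
  have := Finset.sum_powerset_neg_one_pow_card (x := x)
  have h2 : ((∑ m ∈ x.powerset, (-1 : ℤ) ^ m.card : ℤ) : ℝ)
      = ∑ m ∈ x.powerset, (-1 : ℝ) ^ m.card := by push_cast; ring_nf
  rw [← h2, this]
  split <;> simp

/-- Möbius: sum of (-1)^(card (t\u)) over v ⊆ u ⊆ t. -/
lemma sum_Icc_neg_one_pow {α : Type*} [DecidableEq α] (v t : Finset α) (hvt : v ⊆ t) :
    (∑ u ∈ Finset.Icc v t, (-1 : ℝ) ^ ((t \ u).card)) = if t = v then 1 else 0 := by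
  rw [show (∑ u ∈ Finset.Icc v t, (-1 : ℝ) ^ ((t \ u).card))
      = ∑ r ∈ (t \ v).powerset, (-1 : ℝ) ^ r.card from ?_]
  · rw [real_sum_powerset_neg_one_pow_card]
    congr 1
    simp only [Finset.sdiff_eq_empty_iff_subset, eq_iff_iff]
    constructor
    · intro h; exact le_antisymm h hvt
    · intro h; exact h.le
  · refine Finset.sum_nbij' (fun u => t \ u) (fun r => t \ r) ?_ ?_ ?_ ?_ ?_
    · intro u hu
      simp only [Finset.mem_Icc] at hu
      simp only [Finset.mem_powerset]
      exact Finset.sdiff_subset_sdiff le_rfl hu.1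
    · intro r hr
      simp only [Finset.mem_powerset] at hr
      simp only [Finset.mem_Icc]
      constructor
      · refine Finset.subset_sdiff.2 ⟨hvt, Finset.disjoint_left.2 fun a hav har => ?_⟩
        exact (Finset.mem_sdiff.1 (hr har)).2 hav
      · exact Finset.sdiff_subset
    · intro u hu
      simp only [Finset.mem_Icc] at hu
      exact Finset.sdiff_sdiff_eq_self hu.2
    · intro r hr
      simp only [Finset.mem_powerset] at hr
      exact Finset.sdiff_sdiff_eq_self (hr.trans Finset.sdiff_subset)
    · intro u hu; rfl

/-- One-dimensional telescoping over naturals. -/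
lemma nat_tel (ψ : ℕ → ℝ) (m tv : ℕ) (h : tv ≤ m) :
    (∑ l ∈ Finset.range m, (if tv ≤ l then ψ (l + 1) - ψ l else 0)) = ψ m - ψ tv := by
  induction m with
  | zero => simp [Nat.le_zero.1 h]
  | succ n ih =>
    rcases Nat.lt_or_ge tv (n+1) with h1 | h1
    · have hn : tv ≤ n := Nat.lt_succ_iff.1 h1
      rw [Finset.sum_range_succ, ih hn, if_pos hn]; ring
    · have : tv = n + 1 := le_antisymm h h1
      subst this
      have hz : ∀ l ∈ Finset.range (n+1), (if n+1 ≤ l then ψ (l + 1) - ψ l else 0) = 0 := by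
        intro l hl; simp only [Finset.mem_range] at hl; rw [if_neg (by omega)]
      rw [show (∑ l ∈ Finset.range (n+1), (if n+1 ≤ l then ψ (l + 1) - ψ l else 0)) = 0 from
        Finset.sum_eq_zero hz]
      ring

section EDef
variable {ι : Type*} [Fintype ι] [DecidableEq ι]

open Classical in
/-- Indicator of a proposition, as a real number. -/
noncomputable def ind (P : Prop) : ℝ := if P then 1 else 0

lemma ind_pos {P : Prop} (h : P) : ind P = 1 := by simp [ind, h]
lemma ind_neg {P : Prop} (h : ¬ P) : ind P = 0 := by simp [ind, h]
lemma ind_nonneg (P : Prop) : 0 ≤ ind P := by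
  by_cases h : P
  · rw [ind_pos h]; norm_num
  · rw [ind_neg h]

/-- Partial alternating sum of `f` over the subcube spanned by `s`,
with corners given by `A` (low) and `B` (high / fixed values outside `s`). -/
def E (f : (ι → ℝ) → ℝ) (s : Finset ι) (A B : ι → ℝ) : ℝ :=
  ∑ v ∈ s.powerset, (-1 : ℝ) ^ v.card * f (fun j => if j ∈ v then A j else B j)

lemma helper_ind_sum (v t : Finset ι) :
    (∑ u : Finset ι, ind (v ⊆ u) * (ind (u ⊆ t) * (-1 : ℝ) ^ ((t \ u).card)))
      = ind (t = v) := by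
  classical
  have h1 : ∀ u : Finset ι, ind (v ⊆ u) * (ind (u ⊆ t) * (-1 : ℝ) ^ ((t \ u).card))
      = if (v ⊆ u ∧ u ⊆ t) then (-1 : ℝ) ^ ((t \ u).card) else 0 := by
    intro u
    by_cases h1 : v ⊆ u <;> by_cases h2 : u ⊆ t <;>
      simp [ind_pos, ind_neg, h1, h2]
  rw [Finset.sum_congr rfl (fun u _ => h1 u), ← Finset.sum_filter]
  have h2 : Finset.univ.filter (fun u : Finset ι => v ⊆ u ∧ u ⊆ t) = Finset.Icc v t := by
    ext u; simp [Finset.mem_Icc]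
  rw [h2]
  by_cases hvt : v ⊆ t
  · rw [sum_Icc_neg_one_pow v t hvt]
    by_cases h : t = v <;> simp [ind_pos, ind_neg, h]
  · have : Finset.Icc v t = ∅ := Finset.Icc_eq_empty (fun h => hvt h)
    rw [this]
    have : t ≠ v := fun h => hvt (h ▸ le_rfl)
    simp [ind_neg this]

lemma powerset_sum_eq_ind {M : Type*} [AddCommMonoid M] :
    True := trivial

lemma sum_powerset_to_ind (u : Finset ι) (X : Finset ι → ℝ) :
    (∑ v ∈ u.powerset, X v) = ∑ v : Finset ι, ind (v ⊆ u) * X v := by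
  classical
  have : ∀ v : Finset ι, ind (v ⊆ u) * X v = if v ∈ u.powerset then X v else 0 := by
    intro v
    by_cases h : v ⊆ u <;> simp [ind_pos, ind_neg, h, Finset.mem_powerset]
  rw [Finset.sum_congr rfl (fun v _ => this v), ← Finset.sum_filter]
  congr 1
  ext v; simp

lemma prod_rule (f g : (ι → ℝ) → ℝ) (A B : ι → ℝ) :
    altSum (fun x => f x * g x) A B
      = ∑ u : Finset ι, E f u A B * E g uᶜ A (fun j => if j ∈ u then A j else B j) := by
  classical
  set pt : Finset ι → ι → ℝ := fun t j => if j ∈ t then A j else B j with hpt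
  -- rewrite the second factor
  have hmix : ∀ u : Finset ι,
      E g uᶜ A (fun j => if j ∈ u then A j else B j)
        = ∑ t : Finset ι, ind (u ⊆ t) * ((-1 : ℝ) ^ ((t \ u).card) * g (pt t)) := by
    intro u
    have h1 : E g uᶜ A (fun j => if j ∈ u then A j else B j)
        = ∑ w ∈ uᶜ.powerset, (-1 : ℝ) ^ w.card * g (pt (u ∪ w)) := by
      refine Finset.sum_congr rfl fun w hw => ?_
      congr 2
      funext j
      by_cases hjw : j ∈ w
      · simp [pt, hjw]
      · by_cases hju : j ∈ u <;> simp [pt, hjw, hju]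
    rw [h1]
    have h2 : (∑ w ∈ uᶜ.powerset, (-1 : ℝ) ^ w.card * g (pt (u ∪ w)))
        = ∑ t ∈ Finset.Icc u Finset.univ, (-1 : ℝ) ^ ((t \ u).card) * g (pt t) := by
      refine Finset.sum_nbij' (fun w => u ∪ w) (fun t => t \ u) ?_ ?_ ?_ ?_ ?_
      · intro w hw; simp [Finset.mem_Icc]
      · intro t ht
        simp only [Finset.mem_powerset]
        intro a ha
        simp only [Finset.mem_sdiff] at ha
        simp [ha.2]
      · intro w hw
        simp only [Finset.mem_powerset] at hw
        refine Finset.union_sdiff_cancel_left ?_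
        exact Finset.disjoint_left.2 fun a hau haw => (Finset.mem_compl.1 (hw haw)) hau
      · intro t ht
        simp only [Finset.mem_Icc] at ht
        exact Finset.union_sdiff_of_subset ht.1
      · intro w hw
        simp only [Finset.mem_powerset] at hw
        rw [Finset.union_sdiff_cancel_left
          (Finset.disjoint_left.2 fun a hau haw => (Finset.mem_compl.1 (hw haw)) hau)]
    rw [h2]
    have h3 : Finset.Icc u Finset.univ = Finset.univ.filter (fun t => u ⊆ t) := by
      ext t; simp [Finset.mem_Icc]
    rw [h3, Finset.sum_filter]
    refine Finset.sum_congr rfl fun t _ => ?_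
    by_cases h : u ⊆ t <;> simp [ind_pos, ind_neg, h]
  -- expand everything
  have expand : (∑ u : Finset ι, E f u A B * E g uᶜ A (fun j => if j ∈ u then A j else B j))
      = ∑ u : Finset ι, ∑ v : Finset ι, ∑ t : Finset ι,
          (ind (v ⊆ u) * (ind (u ⊆ t) * (-1 : ℝ) ^ ((t \ u).card)))
            * (((-1 : ℝ) ^ v.card * f (pt v)) * g (pt t)) := by
    refine Finset.sum_congr rfl fun u _ => ?_
    rw [hmix u]
    have : E f u A B = ∑ v : Finset ι, ind (v ⊆ u) * ((-1 : ℝ) ^ v.card * f (pt v)) :=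
      sum_powerset_to_ind u _
    rw [this, Finset.sum_mul_sum]
    refine Finset.sum_congr rfl fun v _ => Finset.sum_congr rfl fun t _ => ?_
    ring
  rw [expand, Finset.sum_comm]
  refine Eq.symm ?_
  -- now outer v, middle u, inner t; swap u and t
  have swap2 : ∀ v : Finset ι,
      (∑ u : Finset ι, ∑ t : Finset ι,
        (ind (v ⊆ u) * (ind (u ⊆ t) * (-1 : ℝ) ^ ((t \ u).card)))
          * (((-1 : ℝ) ^ v.card * f (pt v)) * g (pt t)))
      = ∑ t : Finset ι, (∑ u : Finset ι,
          (ind (v ⊆ u) * (ind (u ⊆ t) * (-1 : ℝ) ^ ((t \ u).card))))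
            * (((-1 : ℝ) ^ v.card * f (pt v)) * g (pt t)) := by
    intro v
    rw [Finset.sum_comm]
    refine Finset.sum_congr rfl fun t _ => ?_
    rw [Finset.sum_mul]
  calc (∑ v : Finset ι, ∑ u : Finset ι, ∑ t : Finset ι,
        (ind (v ⊆ u) * (ind (u ⊆ t) * (-1 : ℝ) ^ ((t \ u).card)))
          * (((-1 : ℝ) ^ v.card * f (pt v)) * g (pt t)))
      = ∑ v : Finset ι, ∑ t : Finset ι,
          ind (t = v) * (((-1 : ℝ) ^ v.card * f (pt v)) * g (pt t)) := by
        refine Finset.sum_congr rfl fun v _ => ?_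
        rw [swap2 v]
        refine Finset.sum_congr rfl fun t _ => ?_
        rw [helper_ind_sum]
    _ = ∑ v : Finset ι, ((-1 : ℝ) ^ v.card * f (pt v)) * g (pt v) := by
        refine Finset.sum_congr rfl fun v _ => ?_
        rw [Finset.sum_eq_single v]
        · simp [ind_pos]
        · intro t _ htv
          simp [ind_neg htv]
        · intro h; exact absurd (Finset.mem_univ v) h
    _ = altSum (fun x => f x * g x) A B := by
        unfold altSum
        refine Finset.sum_congr rfl fun v _ => ?_
        ring

variable {ι : Type*} [Fintype ι] [DecidableEq ι]

lemma tel1 (L : Ladder ι 0 1) (f : (ι → ℝ) → ℝ) (s : Finset ι) (A B : ι → ℝ) (j : ι)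
    (hj : j ∉ s) (t : Fin (L.m j + 1)) (hB : B j = L.pts j t) :
    E f s A B = E f s A (Function.update B j 1)
      - ∑ l : Fin (L.m j), (if t ≤ l.castSucc then
          E f (insert j s) (Function.update A j (L.pts j l.castSucc))
            (Function.update B j (L.pts j l.succ)) else 0) := by
  classical
  set p : Finset ι → ℝ → (ι → ℝ) :=
    fun v c => (fun j' => if j' ∈ v then A j' else Function.update B j c j') with hp
  -- (2)
  have h2 : E f s A B = ∑ v ∈ s.powerset, (-1 : ℝ) ^ v.card * f (p v (B j)) := by
    unfold E
    refine Finset.sum_congr rfl fun v hv => ?_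
    congr 2
    funext j'
    simp only [p, Function.update_eq_self]
  -- (1)
  have h1 : ∀ c : ℝ, E f s A (Function.update B j c)
      = ∑ v ∈ s.powerset, (-1 : ℝ) ^ v.card * f (p v c) := by
    intro c; rfl
  -- (3)
  have h3 : ∀ x y : ℝ,
      E f (insert j s) (Function.update A j x) (Function.update B j y)
        = ∑ v ∈ s.powerset, (-1 : ℝ) ^ v.card * (f (p v y) - f (p v x)) := by
    intro x y
    unfold E
    rw [Finset.sum_powerset_insert hj, ← Finset.sum_add_distrib]
    refine Finset.sum_congr rfl fun v hv => ?_
    rw [Finset.mem_powerset] at hv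
    have hjv : j ∉ v := fun h => hj (hv h)
    have hcard : (insert j v).card = v.card + 1 := Finset.card_insert_of_notMem hjv
    have e1 : (fun j' => if j' ∈ v then Function.update A j x j' else Function.update B j y j')
        = p v y := by
      funext j'
      by_cases hj' : j' = j
      · subst hj'
        rw [if_neg hjv, Function.update_self]
        simp only [p]
        rw [if_neg hjv, Function.update_self]
      · by_cases hv' : j' ∈ v <;>
          simp [p, hv', Function.update_of_ne hj']
    have e2 : (fun j' => if j' ∈ insert j v then Function.update A j x j'
          else Function.update B j y j') = p v x := by
      funext j'
      by_cases hj' : j' = j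
      · subst hj'
        rw [if_pos (Finset.mem_insert_self _ _), Function.update_self]
        simp only [p]
        rw [if_neg hjv, Function.update_self]
      · by_cases hv' : j' ∈ v <;>
          simp [p, hv', Finset.mem_insert, hj', Function.update_of_ne hj']
    rw [e1, e2, hcard]
    ring
  -- telescoping per v
  have h4 : ∀ v ∈ s.powerset,
      (∑ l : Fin (L.m j), (if t ≤ l.castSucc then
          f (p v (L.pts j l.succ)) - f (p v (L.pts j l.castSucc)) else 0))
        = f (p v 1) - f (p v (B j)) := by
    intro v hv
    set φ : Fin (L.m j + 1) → ℝ := fun i => f (p v (L.pts j i)) with hφ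
    set ψ : ℕ → ℝ := fun i => φ ⟨min i (L.m j), Nat.lt_succ_of_le (min_le_right _ _)⟩ with hψ
    have key : ∀ l : Fin (L.m j), (if t ≤ l.castSucc then
        f (p v (L.pts j l.succ)) - f (p v (L.pts j l.castSucc)) else 0)
        = (fun i : ℕ => if t.val ≤ i then ψ (i+1) - ψ i else 0) l.val := by
      intro l
      simp only
      have v1 : ψ (l.val + 1) = f (p v (L.pts j l.succ)) := by
        have harg : (⟨min (l.val + 1) (L.m j), Nat.lt_succ_of_le (min_le_right _ _)⟩
            : Fin (L.m j + 1)) = l.succ := by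
          apply Fin.ext
          have := l.isLt
          simp only [Fin.val_succ]
          omega
        simp only [ψ, φ, harg]
      have v2 : ψ l.val = f (p v (L.pts j l.castSucc)) := by
        have harg : (⟨min l.val (L.m j), Nat.lt_succ_of_le (min_le_right _ _)⟩
            : Fin (L.m j + 1)) = l.castSucc := by
          apply Fin.ext
          have := l.isLt
          simp only [Fin.coe_castSucc]
          omega
        simp only [ψ, φ, harg]
      by_cases hcond : t.val ≤ l.val
      · rw [if_pos hcond, if_pos (Fin.le_def.2 (by simpa using hcond)), v1, v2]
      · rw [if_neg hcond, if_neg (fun h => hcond (by simpa using Fin.le_def.1 h))]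
    rw [Finset.sum_congr rfl (fun l _ => key l)]
    rw [Fin.sum_univ_eq_sum_range (fun i : ℕ => if t.val ≤ i then ψ (i+1) - ψ i else 0) (L.m j)]
    rw [nat_tel ψ (L.m j) t.val (Nat.lt_succ_iff.1 t.isLt)]
    have hψm : ψ (L.m j) = f (p v 1) := by
      simp only [ψ, φ]
      have h1 : (⟨min (L.m j) (L.m j), Nat.lt_succ_of_le (min_le_right _ _)⟩ : Fin (L.m j + 1))
          = Fin.last (L.m j) := Fin.ext (by simp)
      rw [h1]
      have h2 := L.last j
      simp only [Pi.one_apply] at h2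
      rw [h2]
    have hψt : ψ t.val = f (p v (B j)) := by
      simp only [ψ, φ]
      have h1 : (⟨min t.val (L.m j), Nat.lt_succ_of_le (min_le_right _ _)⟩ : Fin (L.m j + 1))
          = t := Fin.ext (by simp; omega)
      rw [h1, hB]
    rw [hψm, hψt]
  -- assemble
  have h5 : (∑ l : Fin (L.m j), (if t ≤ l.castSucc then
          E f (insert j s) (Function.update A j (L.pts j l.castSucc))
            (Function.update B j (L.pts j l.succ)) else 0))
      = ∑ v ∈ s.powerset, (-1 : ℝ) ^ v.card * (f (p v 1) - f (p v (B j))) := by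
    have step : ∀ l : Fin (L.m j), (if t ≤ l.castSucc then
          E f (insert j s) (Function.update A j (L.pts j l.castSucc))
            (Function.update B j (L.pts j l.succ)) else 0)
        = ∑ v ∈ s.powerset, (-1 : ℝ) ^ v.card *
            (if t ≤ l.castSucc then
              f (p v (L.pts j l.succ)) - f (p v (L.pts j l.castSucc)) else 0) := by
      intro l
      by_cases hc : t ≤ l.castSucc
      · rw [if_pos hc, h3]
        refine Finset.sum_congr rfl fun v hv => ?_
        rw [if_pos hc]
      · rw [if_neg hc]
        symm
        refine Finset.sum_eq_zero fun v hv => ?_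
        rw [if_neg hc, mul_zero]
    rw [Finset.sum_congr rfl (fun l _ => step l), Finset.sum_comm]
    refine Finset.sum_congr rfl fun v hv => ?_
    rw [← Finset.mul_sum, h4 v hv]
  rw [h5, h2, h1]
  rw [← Finset.sum_sub_distrib]
  refine Finset.sum_congr rfl fun v hv => ?_
  ring

/-- Restriction of a ladder to the face spanned by `s`. -/
def Ladder.face {ι : Type*} [Fintype ι] {a b : ι → ℝ} (L : Ladder ι a b) (s : Finset ι) :
    Ladder {j // j ∈ s} (fun j => a j) (fun j => b j) where
  m := fun j => L.m j
  pts := fun j => L.pts j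
  mono := fun j => L.mono j
  first := fun j => L.first j
  last := fun j => L.last j

lemma ofReal_varSum_le_vitaliVar {ι : Type*} [Fintype ι] [DecidableEq ι] {a b : ι → ℝ}
    (L : Ladder ι a b) (f : (ι → ℝ) → ℝ) :
    ENNReal.ofReal (L.varSum f) ≤ vitaliVar f a b :=
  le_iSup (fun L : Ladder ι a b => ENNReal.ofReal (L.varSum f)) L

lemma E_eq_altSum_subtype {ι : Type*} [Fintype ι] [DecidableEq ι]
    (f : (ι → ℝ) → ℝ) (s : Finset ι) (A B : ι → ℝ) (hB : ∀ j, j ∉ s → B j = 1) :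
    E f s A B = altSum (fixOutside s 1 f)
      (fun j : {x // x ∈ s} => A j) (fun j : {x // x ∈ s} => B j) := by
  classical
  unfold altSum
  symm
  refine Finset.sum_nbij' (i := fun v : Finset {x // x ∈ s} => v.map (Function.Embedding.subtype _))
    (j := fun v : Finset ι => v.subtype (· ∈ s)) ?_ ?_ ?_ ?_ ?_
  · intro v _
    simp only [Finset.mem_powerset]
    intro j hj
    exact Finset.property_of_mem_map_subtype v hj
  · intro v _; exact Finset.mem_univ _
  · intro v _
    ext x
    simp [Finset.mem_subtype]
  · intro v hv
    simp only [Finset.mem_powerset] at hv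
    exact Finset.subtype_map_of_mem (fun x hx => hv hx)
  · intro v _
    dsimp only
    have hc : (v.map (Function.Embedding.subtype _)).card = v.card := Finset.card_map _
    rw [hc]
    congr 1
    unfold fixOutside
    congr 1
    funext j
    by_cases hj : j ∈ s
    · rw [dif_pos hj]
      dsimp only
      by_cases hjv : (⟨j, hj⟩ : {x // x ∈ s}) ∈ v
      · rw [if_pos hjv, if_pos]
        simp only [Finset.mem_map]
        exact ⟨⟨j, hj⟩, hjv, rfl⟩
      · rw [if_neg hjv, if_neg]
        intro hmem
        simp only [Finset.mem_map] at hmem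
        obtain ⟨x, hx, hxe⟩ := hmem
        apply hjv
        have hxj : x = ⟨j, hj⟩ := Subtype.ext hxe
        rwa [hxj] at hx
    · rw [dif_neg hj]
      have hnm : j ∉ v.map (Function.Embedding.subtype _) :=
        fun hmem => hj (Finset.property_of_mem_map_subtype _ hmem)
      rw [if_neg hnm, hB j hj]
      exact Pi.one_apply j

lemma vitaliVar_ne_top_of_isEmpty {κ : Type*} [Fintype κ] [DecidableEq κ] [IsEmpty κ]
    (h : (κ → ℝ) → ℝ) (a b : κ → ℝ) : vitaliVar h a b ≠ ⊤ := by
  classical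
  have key : ∀ L : Ladder κ a b, L.varSum h = |h b| := by
    intro L
    unfold Ladder.varSum
    have h1 : (Finset.univ : Finset (∀ j, Fin (L.m j))) = {(fun j => isEmptyElim j)} := by
      ext k
      simp only [Finset.mem_univ, Finset.mem_singleton, true_iff]
      funext j; exact isEmptyElim j
    rw [h1, Finset.sum_singleton]
    congr 1
    unfold altSum
    have h2 : (Finset.univ : Finset (Finset κ)) = {∅} := by
      ext v
      simp only [Finset.mem_univ, Finset.mem_singleton, true_iff]
      ext j; exact isEmptyElim j
    rw [h2, Finset.sum_singleton]
    simp only [Finset.card_empty, pow_zero, one_mul]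
    congr 1
    funext j; exact isEmptyElim j
  have : vitaliVar h a b ≤ ENNReal.ofReal |h b| := by
    refine iSup_le fun L => le_of_eq ?_
    rw [key L]
  exact ne_top_of_le_ne_top ENNReal.ofReal_ne_top this

section Reindex

variable {κ κ' : Type*} [Fintype κ] [DecidableEq κ] [Fintype κ'] [DecidableEq κ']

lemma varSum_reindex (e : κ ≃ κ') (h : (κ' → ℝ) → ℝ) (a b : κ' → ℝ)
    (L : Ladder κ (fun j => a (e j)) (fun j => b (e j))) :
    ∃ L' : Ladder κ' a b,
      L.varSum (fun x => h (fun j' => x (e.symm j'))) = L'.varSum h := by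
  classical
  refine ⟨⟨fun j' => L.m (e.symm j'), fun j' => L.pts (e.symm j'),
    fun j' => L.mono (e.symm j'),
    fun j' => by simpa using L.first (e.symm j'),
    fun j' => by simpa using L.last (e.symm j')⟩, ?_⟩
  unfold Ladder.varSum
  refine Fintype.sum_equiv (Equiv.piCongrLeft' (fun j => Fin (L.m j)) e) _ _ fun k => ?_
  congr 1
  unfold altSum
  refine Fintype.sum_equiv (Equiv.finsetCongr e) _ _ fun v => ?_
  dsimp only
  rw [show (Equiv.finsetCongr e v).card = v.card from by simp]
  congr 1
  congr 1
  funext j'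
  have hmem : (j' ∈ Equiv.finsetCongr e v) ↔ e.symm j' ∈ v := by
    simp [Equiv.finsetCongr_apply, Finset.mem_map_equiv]
  simp only [Equiv.piCongrLeft'_apply]
  by_cases hj : e.symm j' ∈ v
  · rw [if_pos (hmem.2 hj), if_pos hj]
  · rw [if_neg (fun hh => hj (hmem.1 hh)), if_neg hj]

lemma vitaliVar_reindex_le (e : κ ≃ κ') (h : (κ' → ℝ) → ℝ) (a b : κ' → ℝ) :
    vitaliVar (fun x => h (fun j' => x (e.symm j'))) (fun j => a (e j)) (fun j => b (e j))
      ≤ vitaliVar h a b := by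
  refine iSup_le fun L => ?_
  obtain ⟨L', hL⟩ := varSum_reindex e h a b L
  rw [hL]
  exact ofReal_varSum_le_vitaliVar L' h

lemma vitaliVar_reindex (e : κ ≃ κ') (h : (κ' → ℝ) → ℝ) (a b : κ' → ℝ) :
    vitaliVar (fun x => h (fun j' => x (e.symm j'))) (fun j => a (e j)) (fun j => b (e j))
      = vitaliVar h a b := by
  refine le_antisymm (vitaliVar_reindex_le e h a b) ?_
  have key := vitaliVar_reindex_le e.symm
    (fun x : κ → ℝ => h (fun j' => x (e.symm j'))) (fun j => a (e j)) (fun j => b (e j))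
  have e1 : (fun y : κ' → ℝ => (fun x : κ → ℝ => h (fun j' => x (e.symm j')))
      (fun j : κ => y (e.symm.symm j))) = h := by
    funext y
    simp only [Equiv.symm_symm, Equiv.apply_symm_apply]
  have e2 : (fun j' : κ' => (fun j : κ => a (e j)) (e.symm j')) = a := by
    funext j'; simp
  have e3 : (fun j' : κ' => (fun j : κ => b (e j)) (e.symm j')) = b := by
    funext j'; simp
  rw [e1, e2, e3] at key
  exact key

end Reindex

section DiagSums

variable {ι : Type*} [Fintype ι] [DecidableEq ι] {m : ι → ℕ}

lemma sum_diag_update (j : ι) (c : Fin (m j)) (Y : (∀ i, Fin (m i)) → ℝ) :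
    ∑ k : (∀ i, Fin (m i)), (if k j = c then (1:ℝ) else 0)
        * (∑ l : Fin (m j), Y (Function.update k j l))
      = ∑ k : (∀ i, Fin (m i)), Y k := by
  classical
  have h1 : ∀ k : (∀ i, Fin (m i)), (if k j = c then (1:ℝ) else 0)
      * (∑ l : Fin (m j), Y (Function.update k j l))
      = ∑ l : Fin (m j), (if k j = c then Y (Function.update k j l) else 0) := by
    intro k
    by_cases h : k j = c <;> simp [h]
  rw [Finset.sum_congr rfl (fun k _ => h1 k), ← Finset.sum_product']
  rw [show (∑ p ∈ ((Finset.univ ×ˢ Finset.univ) :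
        Finset ((∀ i, Fin (m i)) × Fin (m j))),
      (if p.1 j = c then Y (Function.update p.1 j p.2) else 0))
    = ∑ p ∈ ((Finset.univ ×ˢ Finset.univ) :
        Finset ((∀ i, Fin (m i)) × Fin (m j))).filter
        (fun p => p.1 j = c),
        Y (Function.update p.1 j p.2) from (Finset.sum_filter _ _).symm]
  refine Finset.sum_nbij' (i := fun p => Function.update p.1 j p.2)
    (j := fun k => (Function.update k j c, k j)) ?_ ?_ ?_ ?_ ?_
  · intro p _; exact Finset.mem_univ _
  · intro k _
    refine Finset.mem_filter.2 ⟨Finset.mem_product.2 ⟨Finset.mem_univ _, Finset.mem_univ _⟩, ?_⟩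
    exact Function.update_self j c k
  · intro p hp
    simp only [Finset.mem_filter] at hp
    have h2 : Function.update (Function.update p.1 j p.2) j c = p.1 := by
      rw [Function.update_idem, ← hp.2, Function.update_eq_self]
    have h3 : (Function.update p.1 j p.2) j = p.2 := Function.update_self j p.2 p.1
    exact Prod.ext h2 h3
  · intro k _
    dsimp only
    rw [Function.update_idem, Function.update_eq_self]
  · intro p _; rfl

open Classical in
lemma diag_factor (s1 s2 z w : Finset ι)
    (hcov : ∀ j, j ∈ s1 ∨ j ∈ s2) (hint : ∀ j, j ∈ s1 → j ∈ s2 → (j ∈ z ∨ j ∈ w))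
    (hz1 : z ⊆ s1) (hw1 : w ⊆ s1) (hz2 : z ⊆ s2) (hw2 : w ⊆ s2)
    (Y1 : (∀ x : {i // i ∈ s1}, Fin (m x.1)) → ℝ)
    (Y2 : (∀ x : {i // i ∈ s2}, Fin (m x.1)) → ℝ) :
    (∑ k1 : (∀ i, Fin (m i)), ∑ k2 : (∀ i, Fin (m i)),
      ind (∀ j, j ∉ z → j ∉ w → k1 j = k2 j)
        * (Y1 (fun x => k1 x.1) * Y2 (fun x => k2 x.1)))
      = (∑ κ1 : (∀ x : {i // i ∈ s1}, Fin (m x.1)), Y1 κ1)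
        * (∑ κ2 : (∀ x : {i // i ∈ s2}, Fin (m x.1)), Y2 κ2) := by
  rw [Finset.sum_mul_sum, ← Finset.sum_product', ← Finset.sum_product']
  have h1 : ∀ p : (∀ i, Fin (m i)) × (∀ i, Fin (m i)),
      ind (∀ j, j ∉ z → j ∉ w → p.1 j = p.2 j)
        * (Y1 (fun x => p.1 x.1) * Y2 (fun x => p.2 x.1))
      = if (∀ j, j ∉ z → j ∉ w → p.1 j = p.2 j)
          then Y1 (fun x => p.1 x.1) * Y2 (fun x => p.2 x.1) else 0 := by
    intro p
    by_cases h : (∀ j, j ∉ z → j ∉ w → p.1 j = p.2 j)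
    · rw [ind_pos h, if_pos h, one_mul]
    · rw [ind_neg h, if_neg h, zero_mul]
  rw [Finset.sum_congr rfl (fun p _ => h1 p)]
  rw [show (∑ p ∈ ((Finset.univ ×ˢ Finset.univ) :
        Finset ((∀ i, Fin (m i)) × (∀ i, Fin (m i)))),
      (if (∀ j, j ∉ z → j ∉ w → p.1 j = p.2 j)
        then Y1 (fun x => p.1 x.1) * Y2 (fun x => p.2 x.1) else 0))
    = ∑ p ∈ ((Finset.univ ×ˢ Finset.univ) :
        Finset ((∀ i, Fin (m i)) × (∀ i, Fin (m i)))).filter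
        (fun p => (∀ j, j ∉ z → j ∉ w → p.1 j = p.2 j)),
        Y1 (fun x => p.1 x.1) * Y2 (fun x => p.2 x.1) from (Finset.sum_filter _ _).symm]
  refine Finset.sum_nbij'
    (i := fun p => ((fun x => p.1 x.1, fun x => p.2 x.1) :
        (∀ x : {i // i ∈ s1}, Fin (m x.1)) × (∀ x : {i // i ∈ s2}, Fin (m x.1))))
    (j := fun q => ((fun i => if h : i ∈ s1 then q.1 ⟨i, h⟩ else q.2 ⟨i, (hcov i).resolve_left h⟩),
        (fun i => if h : i ∈ s2 then q.2 ⟨i, h⟩ else q.1 ⟨i, (hcov i).resolve_right h⟩)))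
    ?_ ?_ ?_ ?_ ?_
  · intro p _
    simp only [Finset.mem_product]
    exact ⟨Finset.mem_univ _, Finset.mem_univ _⟩
  · intro q _
    refine Finset.mem_filter.2 ⟨Finset.mem_product.2 ⟨Finset.mem_univ _, Finset.mem_univ _⟩, ?_⟩
    intro i hiz hiw
    dsimp only
    by_cases h1 : i ∈ s1 <;> by_cases h2 : i ∈ s2
    · rcases hint i h1 h2 with h | h
      · exact absurd h hiz
      · exact absurd h hiw
    · rw [dif_pos h1, dif_neg h2]
    · rw [dif_neg h1, dif_pos h2]
    · exact absurd (hcov i) (by simp [h1, h2])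
  · intro p hp
    simp only [Finset.mem_filter] at hp
    have hd := hp.2
    refine Prod.ext ?_ ?_
    · funext i
      dsimp only
      by_cases h : i ∈ s1
      · rw [dif_pos h]
      · rw [dif_neg h]
        exact (hd i (fun hzi => h (hz1 hzi)) (fun hwi => h (hw1 hwi))).symm
    · funext i
      dsimp only
      by_cases h : i ∈ s2
      · rw [dif_pos h]
      · rw [dif_neg h]
        exact hd i (fun hzi => h (hz2 hzi)) (fun hwi => h (hw2 hwi))
  · intro q _
    refine Prod.ext ?_ ?_
    · funext x
      dsimp only
      rw [dif_pos x.2]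
    · funext x
      dsimp only
      rw [dif_pos x.2]
  · intro p _; rfl

end DiagSums

/-- Equivalence between a subtype of a subtype and the mapped subtype. -/
def subSubEquiv {ι : Type*} [DecidableEq ι] (u : Finset ι) (s' : Finset {j // j ∈ u}) :
    {x : {j // j ∈ u} // x ∈ s'} ≃ {j : ι // j ∈ s'.map (Function.Embedding.subtype _)} where
  toFun p := ⟨p.1.1, Finset.mem_map.2 ⟨p.1, p.2, rfl⟩⟩
  invFun q := ⟨⟨q.1, Finset.property_of_mem_map_subtype s' q.2⟩, by
      rcases Finset.mem_map.1 q.2 with ⟨x, hx, hxe⟩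
      have hxq : x = ⟨q.1, Finset.property_of_mem_map_subtype s' q.2⟩ := Subtype.ext hxe
      rwa [hxq] at hx⟩
  left_inv p := Subtype.ext (Subtype.ext rfl)
  right_inv q := Subtype.ext rfl

lemma vitaliVar_subtype_subtype {ι : Type*} [Fintype ι] [DecidableEq ι]
    (u : Finset ι) (s' : Finset {j // j ∈ u}) (f : (ι → ℝ) → ℝ) :
    vitaliVar (fixOutside s' 1 (fixOutside u 1 f))
        (fun _ => (0:ℝ)) (fun _ => (1:ℝ))
      = vitaliVar (fixOutside (s'.map (Function.Embedding.subtype _)) 1 f)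
        (fun _ => (0:ℝ)) (fun _ => (1:ℝ)) := by
  classical
  have hmem : ∀ {j : ι}, j ∈ s'.map (Function.Embedding.subtype _) → j ∈ u :=
    fun hj => Finset.property_of_mem_map_subtype s' hj
  have hmem' : ∀ {j : ι} (hj : j ∈ s'.map (Function.Embedding.subtype _)) (hu : j ∈ u),
      (⟨j, hu⟩ : {x // x ∈ u}) ∈ s' := by
    intro j hj hu
    rcases Finset.mem_map.1 hj with ⟨x, hx, hxe⟩
    have hxj : x = ⟨j, hu⟩ := Subtype.ext hxe
    rwa [hxj] at hx
  have hmem'' : ∀ {j : ι} (hu : j ∈ u), (⟨j, hu⟩ : {x // x ∈ u}) ∈ s' →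
      j ∈ s'.map (Function.Embedding.subtype _) := by
    intro j hu hj
    exact Finset.mem_map.2 ⟨⟨j, hu⟩, hj, rfl⟩
  have key := vitaliVar_reindex (subSubEquiv u s')
    (fixOutside (s'.map (Function.Embedding.subtype _)) 1 f)
    (fun _ => (0:ℝ)) (fun _ => (1:ℝ))
  have hfun : (fun x : ({x : {j // j ∈ u} // x ∈ s'} → ℝ) =>
      (fixOutside (s'.map (Function.Embedding.subtype _)) 1 f)
        (fun j' => x ((subSubEquiv u s').symm j')))
      = fixOutside s' 1 (fixOutside u 1 f) := by
    funext x
    unfold fixOutside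
    congr 1
    funext j
    by_cases hj : j ∈ u
    · rw [dif_pos hj]
      dsimp only
      by_cases hj' : (⟨j, hj⟩ : {x // x ∈ u}) ∈ s'
      · have hjs : j ∈ s'.map (Function.Embedding.subtype _) := hmem'' hj hj'
        rw [dif_pos hjs, dif_pos hj']
        have hvv : (((subSubEquiv u s').symm ⟨j, hjs⟩ : {x : {j // j ∈ u} // x ∈ s'})
            : {j // j ∈ u}).val = j := by
          have h0 := congrArg
            (fun z : {j : ι // j ∈ s'.map (Function.Embedding.subtype _)} => z.val)
            ((subSubEquiv u s').apply_symm_apply ⟨j, hjs⟩)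
          exact h0
        have harg : (subSubEquiv u s').symm ⟨j, hjs⟩
            = (⟨⟨j, hj⟩, hj'⟩ : {x : {j // j ∈ u} // x ∈ s'}) :=
          Subtype.ext (Subtype.ext hvv)
        rw [harg]
      · have hjs : j ∉ s'.map (Function.Embedding.subtype _) := fun h => hj' (hmem' h hj)
        rw [dif_neg hjs, dif_neg hj']
        rfl
    · have hjs : j ∉ s'.map (Function.Embedding.subtype _) := fun h => hj (hmem h)
      rw [dif_neg hjs, dif_neg hj]
  rw [hfun] at key
  exact key

section Grand

variable {ι : Type*} [Fintype ι] [DecidableEq ι]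

/-- Lower corner of the cell indexed by `k`. -/
def cellLo (L : Ladder ι 0 1) (k : ∀ j, Fin (L.m j)) : ι → ℝ :=
  fun j => L.pts j (k j).castSucc

/-- Upper corner of the cell indexed by `k`. -/
def cellUp (L : Ladder ι 0 1) (k : ∀ j, Fin (L.m j)) : ι → ℝ :=
  fun j => L.pts j (k j).succ

def Bpat (L : Ladder ι 0 1) (s d : Finset ι) (k1 k2 : ∀ j, Fin (L.m j)) : ι → ℝ :=
  fun j => if j ∈ s then cellUp L k1 j else if j ∈ d then cellUp L k2 j else 1

def BpatG (L : Ladder ι 0 1) (s d : Finset ι) (k2 k1 : ∀ j, Fin (L.m j)) : ι → ℝ :=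
  fun j => if j ∈ s then cellUp L k2 j else if j ∈ d then cellLo L k1 j else 1

def Af (L : Ladder ι 0 1) (f : (ι → ℝ) → ℝ) (s d : Finset ι)
    (k1 k2 : ∀ j, Fin (L.m j)) : ℝ :=
  E f s (cellLo L k1) (Bpat L s d k1 k2)

def Ag (L : Ladder ι 0 1) (g : (ι → ℝ) → ℝ) (s d : Finset ι)
    (k2 k1 : ∀ j, Fin (L.m j)) : ℝ :=
  E g s (cellLo L k2) (BpatG L s d k2 k1)

noncomputable def cpl (L : Ladder ι 0 1) (z w : Finset ι) (k1 k2 : ∀ j, Fin (L.m j)) : ℝ :=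
  ind (∀ i, i ∉ z → i ∉ w → k1 i = k2 i)

/-- Face variation, in the exact form used by `hkVar`. -/
noncomputable def Vface (f : (ι → ℝ) → ℝ) (s : Finset ι) : ℝ≥0∞ :=
  vitaliVar (fixOutside s (1 : ι → ℝ) f)
    (fun j : {x // x ∈ s} => (0 : ι → ℝ) j) (fun j : {x // x ∈ s} => (1 : ι → ℝ) j)

lemma ind_congr {P Q : Prop} (h : P ↔ Q) : ind P = ind Q := by
  by_cases hp : P
  · rw [ind_pos hp, ind_pos (h.1 hp)]
  · rw [ind_neg hp, ind_neg (fun hq => hp (h.2 hq))]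

lemma cpl_nonneg (L : Ladder ι 0 1) (z w : Finset ι) (k1 k2 : ∀ j, Fin (L.m j)) :
    0 ≤ cpl L z w k1 k2 := ind_nonneg _

lemma cpl_split (L : Ladder ι 0 1) {z w : Finset ι} {j : ι} (hjz : j ∉ z) (hjw : j ∉ w)
    (k1 k2 : ∀ i, Fin (L.m i)) :
    cpl L z w k1 k2 = (if k1 j = k2 j then (1:ℝ) else 0) * cpl L (insert j z) w k1 k2 := by
  unfold cpl
  by_cases hd : k1 j = k2 j
  · by_cases hrest : (∀ i, i ∉ insert j z → i ∉ w → k1 i = k2 i)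
    · have hfull : ∀ i, i ∉ z → i ∉ w → k1 i = k2 i := by
        intro i hiz hiw
        by_cases hij : i = j
        · rw [hij]; exact hd
        · exact hrest i (by simp [Finset.mem_insert, hij, hiz]) hiw
      rw [ind_pos hfull, ind_pos hrest, if_pos hd]; ring
    · have hnf : ¬ (∀ i, i ∉ z → i ∉ w → k1 i = k2 i) := fun hfull =>
        hrest (fun i hiz hiw => hfull i (fun h => hiz (Finset.mem_insert_of_mem h)) hiw)
      rw [ind_neg hnf, ind_neg hrest, if_pos hd]; ring
  · have hnf : ¬ (∀ i, i ∉ z → i ∉ w → k1 i = k2 i) := fun hfull => hd (hfull j hjz hjw)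
    rw [ind_neg hnf, if_neg hd]; ring

lemma cpl_split' (L : Ladder ι 0 1) {z w : Finset ι} {j : ι} (hjz : j ∉ z) (hjw : j ∉ w)
    (k1 k2 : ∀ i, Fin (L.m i)) :
    cpl L z w k1 k2 = (if k2 j = k1 j then (1:ℝ) else 0) * cpl L z (insert j w) k1 k2 := by
  unfold cpl
  by_cases hd : k1 j = k2 j
  · by_cases hrest : (∀ i, i ∉ z → i ∉ insert j w → k1 i = k2 i)
    · have hfull : ∀ i, i ∉ z → i ∉ w → k1 i = k2 i := by
        intro i hiz hiw
        by_cases hij : i = j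
        · rw [hij]; exact hd
        · exact hrest i hiz (by simp [Finset.mem_insert, hij, hiw])
      rw [ind_pos hfull, ind_pos hrest, if_pos hd.symm]; ring
    · have hnf : ¬ (∀ i, i ∉ z → i ∉ w → k1 i = k2 i) := fun hfull =>
        hrest (fun i hiz hiw => hfull i hiz (fun h => hiw (Finset.mem_insert_of_mem h)))
      rw [ind_neg hnf, ind_neg hrest, if_pos hd.symm]; ring
  · have hnf : ¬ (∀ i, i ∉ z → i ∉ w → k1 i = k2 i) := fun hfull => hd (hfull j hjz hjw)
    rw [ind_neg hnf, if_neg (fun h => hd h.symm)]; ring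

lemma cpl_update_left (L : Ladder ι 0 1) {z w : Finset ι} {j : ι} (hj : j ∈ z)
    (k1 k2 : ∀ i, Fin (L.m i)) (l : Fin (L.m j)) :
    cpl L z w (Function.update k1 j l) k2 = cpl L z w k1 k2 := by
  unfold cpl
  refine ind_congr ⟨fun h i hiz hiw => ?_, fun h i hiz hiw => ?_⟩
  · have hij : i ≠ j := fun e => hiz (e ▸ hj)
    have := h i hiz hiw
    rwa [Function.update_of_ne hij] at this
  · have hij : i ≠ j := fun e => hiz (e ▸ hj)
    rw [Function.update_of_ne hij]
    exact h i hiz hiw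

lemma cpl_update_right (L : Ladder ι 0 1) {z w : Finset ι} {j : ι} (hj : j ∈ w)
    (k1 k2 : ∀ i, Fin (L.m i)) (l : Fin (L.m j)) :
    cpl L z w k1 (Function.update k2 j l) = cpl L z w k1 k2 := by
  unfold cpl
  refine ind_congr ⟨fun h i hiz hiw => ?_, fun h i hiz hiw => ?_⟩
  · have hij : i ≠ j := fun e => hiw (e ▸ hj)
    have := h i hiz hiw
    rwa [Function.update_of_ne hij] at this
  · have hij : i ≠ j := fun e => hiw (e ▸ hj)
    rw [Function.update_of_ne hij]
    exact h i hiz hiw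

lemma Ag_update_left (L : Ladder ι 0 1) (g : (ι → ℝ) → ℝ) (s d : Finset ι)
    {j : ι} (hj : j ∉ d) (k2 k1 : ∀ i, Fin (L.m i)) (l : Fin (L.m j)) :
    Ag L g s d k2 (Function.update k1 j l) = Ag L g s d k2 k1 := by
  unfold Ag
  congr 1
  funext i
  unfold BpatG
  by_cases hi : i ∈ s
  · rw [if_pos hi, if_pos hi]
  · rw [if_neg hi, if_neg hi]
    by_cases hid : i ∈ d
    · rw [if_pos hid, if_pos hid]
      unfold cellLo
      have hij : i ≠ j := fun e => hj (by rwa [e] at hid)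
      rw [Function.update_of_ne hij]
    · rw [if_neg hid, if_neg hid]

lemma Af_update_right (L : Ladder ι 0 1) (f : (ι → ℝ) → ℝ) (s d : Finset ι)
    {j : ι} (hj : j ∉ d) (k1 k2 : ∀ i, Fin (L.m i)) (l : Fin (L.m j)) :
    Af L f s d k1 (Function.update k2 j l) = Af L f s d k1 k2 := by
  unfold Af
  congr 1
  funext i
  unfold Bpat
  by_cases hi : i ∈ s
  · rw [if_pos hi, if_pos hi]
  · rw [if_neg hi, if_neg hi]
    by_cases hid : i ∈ d
    · rw [if_pos hid, if_pos hid]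
      unfold cellUp
      have hij : i ≠ j := fun e => hj (by rwa [e] at hid)
      rw [Function.update_of_ne hij]
    · rw [if_neg hid, if_neg hid]

lemma Af_tel (L : Ladder ι 0 1) (f : (ι → ℝ) → ℝ) (u z d1 : Finset ι)
    (hz : z ⊆ uᶜ) (hd1 : d1 ⊆ uᶜ) (hdisj : Disjoint z d1) {j : ι} (hj : j ∈ d1)
    (k1 k2 : ∀ i, Fin (L.m i)) :
    |Af L f (u ∪ z) d1 k1 k2| ≤ |Af L f (u ∪ z) (d1.erase j) k1 k2|
      + ∑ l : Fin (L.m j),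
          |Af L f (u ∪ insert j z) (d1.erase j) (Function.update k1 j l) k2| := by
  classical
  have hju : j ∉ u := by
    have := hd1 hj; simpa [Finset.mem_compl] using this
  have hjz : j ∉ z := fun h => (Finset.disjoint_left.1 hdisj h) hj
  have hjs : j ∉ u ∪ z := by simp [Finset.mem_union, hju, hjz]
  have hBj : Bpat L (u ∪ z) d1 k1 k2 j = L.pts j ((k2 j).succ) := by
    unfold Bpat
    rw [if_neg hjs, if_pos hj]
    rfl
  have htel := tel1 L f (u ∪ z) (cellLo L k1) (Bpat L (u ∪ z) d1 k1 k2) j hjs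
    ((k2 j).succ) hBj
  have hE1 : Function.update (Bpat L (u ∪ z) d1 k1 k2) j 1
      = Bpat L (u ∪ z) (d1.erase j) k1 k2 := by
    funext i
    by_cases hij : i = j
    · subst hij
      rw [Function.update_self]
      unfold Bpat
      rw [if_neg hjs, if_neg (Finset.notMem_erase i d1)]
    · rw [Function.update_of_ne hij]
      unfold Bpat
      by_cases hi : i ∈ u ∪ z
      · rw [if_pos hi, if_pos hi]
      · rw [if_neg hi, if_neg hi]
        by_cases hid : i ∈ d1
        · rw [if_pos hid, if_pos (Finset.mem_erase.2 ⟨hij, hid⟩)]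
        · rw [if_neg hid, if_neg (fun h => hid (Finset.mem_of_mem_erase h))]
  have hE34 : ∀ l : Fin (L.m j),
      E f (insert j (u ∪ z)) (Function.update (cellLo L k1) j (L.pts j l.castSucc))
        (Function.update (Bpat L (u ∪ z) d1 k1 k2) j (L.pts j l.succ))
      = Af L f (u ∪ insert j z) (d1.erase j) (Function.update k1 j l) k2 := by
    intro l
    unfold Af
    have hset : insert j (u ∪ z) = u ∪ insert j z := by
      rw [Finset.union_insert]
    have hA : Function.update (cellLo L k1) j (L.pts j l.castSucc)
        = cellLo L (Function.update k1 j l) := by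
      funext i
      by_cases hij : i = j
      · subst hij
        rw [Function.update_self]
        unfold cellLo
        rw [Function.update_self]
      · rw [Function.update_of_ne hij]
        unfold cellLo
        rw [Function.update_of_ne hij]
    have hB : Function.update (Bpat L (u ∪ z) d1 k1 k2) j (L.pts j l.succ)
        = Bpat L (u ∪ insert j z) (d1.erase j) (Function.update k1 j l) k2 := by
      funext i
      by_cases hij : i = j
      · subst hij
        rw [Function.update_self]
        unfold Bpat
        rw [if_pos (Finset.mem_union_right u (Finset.mem_insert_self i z))]
        unfold cellUp
        rw [Function.update_self]
      · rw [Function.update_of_ne hij]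
        unfold Bpat
        have hmem : (i ∈ u ∪ insert j z) ↔ (i ∈ u ∪ z) := by
          simp [Finset.mem_union, Finset.mem_insert, hij]
        by_cases hi : i ∈ u ∪ z
        · rw [if_pos hi, if_pos (hmem.2 hi)]
          unfold cellUp
          rw [Function.update_of_ne hij]
        · rw [if_neg hi, if_neg (fun h => hi (hmem.1 h))]
          by_cases hid : i ∈ d1
          · rw [if_pos hid, if_pos (Finset.mem_erase.2 ⟨hij, hid⟩)]
          · rw [if_neg hid, if_neg (fun h => hid (Finset.mem_of_mem_erase h))]
    rw [hset, hA, hB]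
  have hsum : (∑ l : Fin (L.m j), (if (k2 j).succ ≤ l.castSucc then
          E f (insert j (u ∪ z)) (Function.update (cellLo L k1) j (L.pts j l.castSucc))
            (Function.update (Bpat L (u ∪ z) d1 k1 k2) j (L.pts j l.succ)) else 0))
      = ∑ l : Fin (L.m j), (if (k2 j).succ ≤ l.castSucc then
          Af L f (u ∪ insert j z) (d1.erase j) (Function.update k1 j l) k2 else 0) := by
    refine Finset.sum_congr rfl fun l _ => ?_
    by_cases hc : (k2 j).succ ≤ l.castSucc
    · rw [if_pos hc, if_pos hc, hE34 l]
    · rw [if_neg hc, if_neg hc]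
  have heq : Af L f (u ∪ z) d1 k1 k2
      = Af L f (u ∪ z) (d1.erase j) k1 k2
        - ∑ l : Fin (L.m j), (if (k2 j).succ ≤ l.castSucc then
            Af L f (u ∪ insert j z) (d1.erase j) (Function.update k1 j l) k2 else 0) := by
    rw [show Af L f (u ∪ z) d1 k1 k2
        = E f (u ∪ z) (cellLo L k1) (Bpat L (u ∪ z) d1 k1 k2) from rfl, htel, hE1, hsum]
    rfl
  rw [heq]
  calc |Af L f (u ∪ z) (d1.erase j) k1 k2
        - ∑ l : Fin (L.m j), (if (k2 j).succ ≤ l.castSucc then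
            Af L f (u ∪ insert j z) (d1.erase j) (Function.update k1 j l) k2 else 0)|
      ≤ |Af L f (u ∪ z) (d1.erase j) k1 k2|
        + |∑ l : Fin (L.m j), (if (k2 j).succ ≤ l.castSucc then
            Af L f (u ∪ insert j z) (d1.erase j) (Function.update k1 j l) k2 else 0)| :=
        abs_sub _ _
    _ ≤ |Af L f (u ∪ z) (d1.erase j) k1 k2|
        + ∑ l : Fin (L.m j),
            |Af L f (u ∪ insert j z) (d1.erase j) (Function.update k1 j l) k2| := by
        gcongr
        calc |∑ l : Fin (L.m j), (if (k2 j).succ ≤ l.castSucc then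
                Af L f (u ∪ insert j z) (d1.erase j) (Function.update k1 j l) k2 else 0)|
            ≤ ∑ l : Fin (L.m j), |(if (k2 j).succ ≤ l.castSucc then
                Af L f (u ∪ insert j z) (d1.erase j) (Function.update k1 j l) k2 else 0)| :=
              Finset.abs_sum_le_sum_abs _ _
          _ ≤ ∑ l : Fin (L.m j),
                |Af L f (u ∪ insert j z) (d1.erase j) (Function.update k1 j l) k2| := by
              refine Finset.sum_le_sum fun l _ => ?_
              by_cases hc : (k2 j).succ ≤ l.castSucc
              · rw [if_pos hc]
              · rw [if_neg hc, abs_zero]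
                exact abs_nonneg _

lemma Ag_tel (L : Ladder ι 0 1) (g : (ι → ℝ) → ℝ) (u w d2 : Finset ι)
    (hw : w ⊆ u) (hd2 : d2 ⊆ u) (hdisj : Disjoint w d2) {j : ι} (hj : j ∈ d2)
    (k2 k1 : ∀ i, Fin (L.m i)) :
    |Ag L g (uᶜ ∪ w) d2 k2 k1| ≤ |Ag L g (uᶜ ∪ w) (d2.erase j) k2 k1|
      + ∑ l : Fin (L.m j),
          |Ag L g (uᶜ ∪ insert j w) (d2.erase j) (Function.update k2 j l) k1| := by
  classical
  have hju : j ∈ u := hd2 hj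
  have hjc : j ∉ uᶜ := by simp [Finset.mem_compl, hju]
  have hjw : j ∉ w := fun h => (Finset.disjoint_left.1 hdisj h) hj
  have hjs : j ∉ uᶜ ∪ w := by simp [Finset.mem_union, hjc, hjw]
  have hBj : BpatG L (uᶜ ∪ w) d2 k2 k1 j = L.pts j ((k1 j).castSucc) := by
    unfold BpatG
    rw [if_neg hjs, if_pos hj]
    rfl
  have htel := tel1 L g (uᶜ ∪ w) (cellLo L k2) (BpatG L (uᶜ ∪ w) d2 k2 k1) j hjs
    ((k1 j).castSucc) hBj
  have hE1 : Function.update (BpatG L (uᶜ ∪ w) d2 k2 k1) j 1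
      = BpatG L (uᶜ ∪ w) (d2.erase j) k2 k1 := by
    funext i
    by_cases hij : i = j
    · subst hij
      rw [Function.update_self]
      unfold BpatG
      rw [if_neg hjs, if_neg (Finset.notMem_erase i d2)]
    · rw [Function.update_of_ne hij]
      unfold BpatG
      by_cases hi : i ∈ uᶜ ∪ w
      · rw [if_pos hi, if_pos hi]
      · rw [if_neg hi, if_neg hi]
        by_cases hid : i ∈ d2
        · rw [if_pos hid, if_pos (Finset.mem_erase.2 ⟨hij, hid⟩)]
        · rw [if_neg hid, if_neg (fun h => hid (Finset.mem_of_mem_erase h))]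
  have hE34 : ∀ l : Fin (L.m j),
      E g (insert j (uᶜ ∪ w)) (Function.update (cellLo L k2) j (L.pts j l.castSucc))
        (Function.update (BpatG L (uᶜ ∪ w) d2 k2 k1) j (L.pts j l.succ))
      = Ag L g (uᶜ ∪ insert j w) (d2.erase j) (Function.update k2 j l) k1 := by
    intro l
    unfold Ag
    have hset : insert j (uᶜ ∪ w) = uᶜ ∪ insert j w := by
      rw [Finset.union_insert]
    have hA : Function.update (cellLo L k2) j (L.pts j l.castSucc)
        = cellLo L (Function.update k2 j l) := by
      funext i
      by_cases hij : i = j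
      · subst hij
        rw [Function.update_self]
        unfold cellLo
        rw [Function.update_self]
      · rw [Function.update_of_ne hij]
        unfold cellLo
        rw [Function.update_of_ne hij]
    have hB : Function.update (BpatG L (uᶜ ∪ w) d2 k2 k1) j (L.pts j l.succ)
        = BpatG L (uᶜ ∪ insert j w) (d2.erase j) (Function.update k2 j l) k1 := by
      funext i
      by_cases hij : i = j
      · subst hij
        rw [Function.update_self]
        unfold BpatG
        rw [if_pos (Finset.mem_union_right _ (Finset.mem_insert_self i w))]
        unfold cellUp
        rw [Function.update_self]
      · rw [Function.update_of_ne hij]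
        unfold BpatG
        have hmem : (i ∈ uᶜ ∪ insert j w) ↔ (i ∈ uᶜ ∪ w) := by
          simp [Finset.mem_union, Finset.mem_insert, hij]
        by_cases hi : i ∈ uᶜ ∪ w
        · rw [if_pos hi, if_pos (hmem.2 hi)]
          unfold cellUp
          rw [Function.update_of_ne hij]
        · rw [if_neg hi, if_neg (fun h => hi (hmem.1 h))]
          by_cases hid : i ∈ d2
          · rw [if_pos hid, if_pos (Finset.mem_erase.2 ⟨hij, hid⟩)]
          · rw [if_neg hid, if_neg (fun h => hid (Finset.mem_of_mem_erase h))]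
    rw [hset, hA, hB]
  have hsum : (∑ l : Fin (L.m j), (if (k1 j).castSucc ≤ l.castSucc then
          E g (insert j (uᶜ ∪ w)) (Function.update (cellLo L k2) j (L.pts j l.castSucc))
            (Function.update (BpatG L (uᶜ ∪ w) d2 k2 k1) j (L.pts j l.succ)) else 0))
      = ∑ l : Fin (L.m j), (if (k1 j).castSucc ≤ l.castSucc then
          Ag L g (uᶜ ∪ insert j w) (d2.erase j) (Function.update k2 j l) k1 else 0) := by
    refine Finset.sum_congr rfl fun l _ => ?_
    by_cases hc : (k1 j).castSucc ≤ l.castSucc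
    · rw [if_pos hc, if_pos hc, hE34 l]
    · rw [if_neg hc, if_neg hc]
  have heq : Ag L g (uᶜ ∪ w) d2 k2 k1
      = Ag L g (uᶜ ∪ w) (d2.erase j) k2 k1
        - ∑ l : Fin (L.m j), (if (k1 j).castSucc ≤ l.castSucc then
            Ag L g (uᶜ ∪ insert j w) (d2.erase j) (Function.update k2 j l) k1 else 0) := by
    rw [show Ag L g (uᶜ ∪ w) d2 k2 k1
        = E g (uᶜ ∪ w) (cellLo L k2) (BpatG L (uᶜ ∪ w) d2 k2 k1) from rfl, htel, hE1, hsum]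
    rfl
  rw [heq]
  calc |Ag L g (uᶜ ∪ w) (d2.erase j) k2 k1
        - ∑ l : Fin (L.m j), (if (k1 j).castSucc ≤ l.castSucc then
            Ag L g (uᶜ ∪ insert j w) (d2.erase j) (Function.update k2 j l) k1 else 0)|
      ≤ |Ag L g (uᶜ ∪ w) (d2.erase j) k2 k1|
        + |∑ l : Fin (L.m j), (if (k1 j).castSucc ≤ l.castSucc then
            Ag L g (uᶜ ∪ insert j w) (d2.erase j) (Function.update k2 j l) k1 else 0)| :=
        abs_sub _ _
    _ ≤ |Ag L g (uᶜ ∪ w) (d2.erase j) k2 k1|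
        + ∑ l : Fin (L.m j),
            |Ag L g (uᶜ ∪ insert j w) (d2.erase j) (Function.update k2 j l) k1| := by
        gcongr
        calc |∑ l : Fin (L.m j), (if (k1 j).castSucc ≤ l.castSucc then
                Ag L g (uᶜ ∪ insert j w) (d2.erase j) (Function.update k2 j l) k1 else 0)|
            ≤ ∑ l : Fin (L.m j), |(if (k1 j).castSucc ≤ l.castSucc then
                Ag L g (uᶜ ∪ insert j w) (d2.erase j) (Function.update k2 j l) k1 else 0)| :=
              Finset.abs_sum_le_sum_abs _ _
          _ ≤ ∑ l : Fin (L.m j),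
                |Ag L g (uᶜ ∪ insert j w) (d2.erase j) (Function.update k2 j l) k1| := by
              refine Finset.sum_le_sum fun l _ => ?_
              by_cases hc : (k1 j).castSucc ≤ l.castSucc
              · rw [if_pos hc]
              · rw [if_neg hc, abs_zero]
                exact abs_nonneg _

end Grand

section GrandMain

variable {ι : Type*} [Fintype ι] [DecidableEq ι]

lemma varSum_nonneg {a b : ι → ℝ} (L : Ladder ι a b) (f : (ι → ℝ) → ℝ) :
    0 ≤ L.varSum f :=
  Finset.sum_nonneg fun _ _ => abs_nonneg _

lemma Af_empty_eq (L : Ladder ι 0 1) (f : (ι → ℝ) → ℝ) (s : Finset ι)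
    (k1 k2 : ∀ i, Fin (L.m i)) :
    Af L f s ∅ k1 k2 = altSum (fixOutside s (1 : ι → ℝ) f)
      (fun x : {i // i ∈ s} => L.pts x.1 (k1 x.1).castSucc)
      (fun x : {i // i ∈ s} => L.pts x.1 (k1 x.1).succ) := by
  have hBpat : Bpat L s ∅ k1 k2 = fun j => if j ∈ s then cellUp L k1 j else 1 := by
    funext i
    unfold Bpat
    by_cases hi : i ∈ s
    · rw [if_pos hi, if_pos hi]
    · rw [if_neg hi, if_neg hi, if_neg (Finset.notMem_empty i)]
  rw [show Af L f s ∅ k1 k2 = E f s (cellLo L k1) (Bpat L s ∅ k1 k2) from rfl, hBpat]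
  rw [E_eq_altSum_subtype f s (cellLo L k1) _ (fun j hj => if_neg hj)]
  have hB2 : (fun x : {i // i ∈ s} =>
        (fun j => if j ∈ s then cellUp L k1 j else 1) x.1)
      = (fun x : {i // i ∈ s} => L.pts x.1 (k1 x.1).succ) := by
    funext x
    simp only
    rw [if_pos x.2]
    rfl
  rw [hB2]
  rfl

lemma Ag_empty_eq (L : Ladder ι 0 1) (g : (ι → ℝ) → ℝ) (s : Finset ι)
    (k2 k1 : ∀ i, Fin (L.m i)) :
    Ag L g s ∅ k2 k1 = altSum (fixOutside s (1 : ι → ℝ) g)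
      (fun x : {i // i ∈ s} => L.pts x.1 (k2 x.1).castSucc)
      (fun x : {i // i ∈ s} => L.pts x.1 (k2 x.1).succ) := by
  have hBpat : BpatG L s ∅ k2 k1 = fun j => if j ∈ s then cellUp L k2 j else 1 := by
    funext i
    unfold BpatG
    by_cases hi : i ∈ s
    · rw [if_pos hi, if_pos hi]
    · rw [if_neg hi, if_neg hi, if_neg (Finset.notMem_empty i)]
  rw [show Ag L g s ∅ k2 k1 = E g s (cellLo L k2) (BpatG L s ∅ k2 k1) from rfl, hBpat]
  rw [E_eq_altSum_subtype g s (cellLo L k2) _ (fun j hj => if_neg hj)]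
  have hB2 : (fun x : {i // i ∈ s} =>
        (fun j => if j ∈ s then cellUp L k2 j else 1) x.1)
      = (fun x : {i // i ∈ s} => L.pts x.1 (k2 x.1).succ) := by
    funext x
    simp only
    rw [if_pos x.2]
    rfl
  rw [hB2]
  rfl

lemma base_case (L : Ladder ι 0 1) (f g : (ι → ℝ) → ℝ) (u z w : Finset ι)
    (hz : z ⊆ uᶜ) (hw : w ⊆ u) :
    ENNReal.ofReal (∑ k1 : ∀ i, Fin (L.m i), ∑ k2 : ∀ i, Fin (L.m i),
        cpl L z w k1 k2 * (|Af L f (u ∪ z) ∅ k1 k2| * |Ag L g (uᶜ ∪ w) ∅ k2 k1|))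
      ≤ Vface f (u ∪ z) * Vface g (uᶜ ∪ w) := by
  classical
  set Y1 : (∀ x : {i // i ∈ u ∪ z}, Fin (L.m x.1)) → ℝ := fun κ =>
    |altSum (fixOutside (u ∪ z) (1:ι→ℝ) f)
      (fun x => L.pts x.1 (κ x).castSucc) (fun x => L.pts x.1 (κ x).succ)| with hY1def
  set Y2 : (∀ x : {i // i ∈ uᶜ ∪ w}, Fin (L.m x.1)) → ℝ := fun κ =>
    |altSum (fixOutside (uᶜ ∪ w) (1:ι→ℝ) g)
      (fun x => L.pts x.1 (κ x).castSucc) (fun x => L.pts x.1 (κ x).succ)| with hY2def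
  have hstep : (∑ k1 : ∀ i, Fin (L.m i), ∑ k2 : ∀ i, Fin (L.m i),
        cpl L z w k1 k2 * (|Af L f (u ∪ z) ∅ k1 k2| * |Ag L g (uᶜ ∪ w) ∅ k2 k1|))
      = (∑ κ1 : ∀ x : {i // i ∈ u ∪ z}, Fin (L.m x.1), Y1 κ1)
        * (∑ κ2 : ∀ x : {i // i ∈ uᶜ ∪ w}, Fin (L.m x.1), Y2 κ2) := by
    rw [← diag_factor (u ∪ z) (uᶜ ∪ w) z w ?hcov ?hint ?hz1 ?hw1 ?hz2 ?hw2 Y1 Y2]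
    case hcov =>
      intro j
      by_cases hj : j ∈ u
      · exact Or.inl (Finset.mem_union_left z hj)
      · exact Or.inr (Finset.mem_union_left w (Finset.mem_compl.2 hj))
    case hint =>
      intro j h1 h2
      rcases Finset.mem_union.1 h1 with hju | hjz
      · rcases Finset.mem_union.1 h2 with hjc | hjw
        · exact absurd hju (Finset.mem_compl.1 hjc)
        · exact Or.inr hjw
      · exact Or.inl hjz
    case hz1 => exact Finset.subset_union_right
    case hw1 => exact hw.trans Finset.subset_union_left
    case hz2 => exact hz.trans Finset.subset_union_left
    case hw2 => exact Finset.subset_union_right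
    refine Finset.sum_congr rfl fun k1 _ => Finset.sum_congr rfl fun k2 _ => ?_
    rw [show |Af L f (u ∪ z) ∅ k1 k2| = Y1 (fun x => k1 x.1) from by
        rw [Af_empty_eq],
      show |Ag L g (uᶜ ∪ w) ∅ k2 k1| = Y2 (fun x => k2 x.1) from by
        rw [Ag_empty_eq]]
    rfl
  rw [hstep]
  have hs1 : (∑ κ1 : ∀ x : {i // i ∈ u ∪ z}, Fin (L.m x.1), Y1 κ1)
      = (L.face (u ∪ z)).varSum (fixOutside (u ∪ z) (1:ι→ℝ) f) := rfl
  have hs2 : (∑ κ2 : ∀ x : {i // i ∈ uᶜ ∪ w}, Fin (L.m x.1), Y2 κ2)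
      = (L.face (uᶜ ∪ w)).varSum (fixOutside (uᶜ ∪ w) (1:ι→ℝ) g) := rfl
  rw [hs1, hs2, ENNReal.ofReal_mul (varSum_nonneg _ _)]
  exact mul_le_mul' (ofReal_varSum_le_vitaliVar _ _) (ofReal_varSum_le_vitaliVar _ _)

lemma grand (L : Ladder ι 0 1) (f g : (ι → ℝ) → ℝ) (u : Finset ι) :
    ∀ (n : ℕ) (z d1 w d2 : Finset ι), d1.card + d2.card = n →
      z ⊆ uᶜ → d1 ⊆ uᶜ → Disjoint z d1 → w ⊆ u → d2 ⊆ u → Disjoint w d2 →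
      ENNReal.ofReal (∑ k1 : ∀ i, Fin (L.m i), ∑ k2 : ∀ i, Fin (L.m i),
          cpl L z w k1 k2 * (|Af L f (u ∪ z) d1 k1 k2| * |Ag L g (uᶜ ∪ w) d2 k2 k1|))
        ≤ (∑ z' ∈ d1.powerset, Vface f (u ∪ z ∪ z'))
          * (∑ w' ∈ d2.powerset, Vface g (uᶜ ∪ w ∪ w')) := by
  classical
  intro n
  induction n with
  | zero =>
    intro z d1 w d2 hcard hz hd1 hzd1 hw hd2 hwd2
    have h1 : d1 = ∅ := Finset.card_eq_zero.1 (by omega)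
    have h2 : d2 = ∅ := Finset.card_eq_zero.1 (by omega)
    subst h1; subst h2
    simp only [Finset.powerset_empty, Finset.sum_singleton, Finset.union_empty]
    exact base_case L f g u z w hz hw
  | succ n ih =>
    intro z d1 w d2 hcard hz hd1 hzd1 hw hd2 hwd2
    rcases d1.eq_empty_or_nonempty with hd1e | hne
    · -- g-side step
      obtain ⟨j, hj⟩ : d2.Nonempty := by
        refine Finset.card_pos.1 ?_
        rw [hd1e] at hcard
        simp at hcard
        omega
      have hju : j ∈ u := hd2 hj
      have hjz : j ∉ z := fun h => (Finset.mem_compl.1 (hz h)) hju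
      have hjw : j ∉ w := fun h => (Finset.disjoint_left.1 hwd2 h) hj
      have hjd1 : j ∉ d1 := fun h => (Finset.mem_compl.1 (hd1 h)) hju
      -- pointwise inequality then rearrangement
      have hpt : ∀ k1 k2 : ∀ i, Fin (L.m i),
          cpl L z w k1 k2 * (|Af L f (u ∪ z) d1 k1 k2| * |Ag L g (uᶜ ∪ w) d2 k2 k1|)
          ≤ cpl L z w k1 k2 * (|Af L f (u ∪ z) d1 k1 k2|
              * |Ag L g (uᶜ ∪ w) (d2.erase j) k2 k1|)
            + cpl L z w k1 k2 * (|Af L f (u ∪ z) d1 k1 k2|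
              * (∑ l : Fin (L.m j),
                  |Ag L g (uᶜ ∪ insert j w) (d2.erase j) (Function.update k2 j l) k1|)) := by
        intro k1 k2
        have h0 := Ag_tel L g u w d2 hw hd2 hwd2 hj k2 k1
        calc cpl L z w k1 k2 * (|Af L f (u ∪ z) d1 k1 k2| * |Ag L g (uᶜ ∪ w) d2 k2 k1|)
            ≤ cpl L z w k1 k2 * (|Af L f (u ∪ z) d1 k1 k2|
              * (|Ag L g (uᶜ ∪ w) (d2.erase j) k2 k1|
                + ∑ l : Fin (L.m j),
                  |Ag L g (uᶜ ∪ insert j w) (d2.erase j) (Function.update k2 j l) k1|)) := by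
              refine mul_le_mul_of_nonneg_left ?_ (cpl_nonneg L z w k1 k2)
              exact mul_le_mul_of_nonneg_left h0 (abs_nonneg _)
          _ = _ := by ring
      have hsum1 : (∑ k1 : ∀ i, Fin (L.m i), ∑ k2 : ∀ i, Fin (L.m i),
          cpl L z w k1 k2 * (|Af L f (u ∪ z) d1 k1 k2| * |Ag L g (uᶜ ∪ w) d2 k2 k1|))
          ≤ (∑ k1 : ∀ i, Fin (L.m i), ∑ k2 : ∀ i, Fin (L.m i),
              cpl L z w k1 k2 * (|Af L f (u ∪ z) d1 k1 k2|
                * |Ag L g (uᶜ ∪ w) (d2.erase j) k2 k1|))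
            + (∑ k1 : ∀ i, Fin (L.m i), ∑ k2 : ∀ i, Fin (L.m i),
              cpl L z w k1 k2 * (|Af L f (u ∪ z) d1 k1 k2|
                * (∑ l : Fin (L.m j),
                  |Ag L g (uᶜ ∪ insert j w) (d2.erase j) (Function.update k2 j l) k1|))) := by
        rw [← Finset.sum_add_distrib]
        refine Finset.sum_le_sum fun k1 _ => ?_
        rw [← Finset.sum_add_distrib]
        exact Finset.sum_le_sum fun k2 _ => hpt k1 k2
      -- reindex the second sum
      have hreidx : (∑ k1 : ∀ i, Fin (L.m i), ∑ k2 : ∀ i, Fin (L.m i),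
            cpl L z w k1 k2 * (|Af L f (u ∪ z) d1 k1 k2|
              * (∑ l : Fin (L.m j),
                |Ag L g (uᶜ ∪ insert j w) (d2.erase j) (Function.update k2 j l) k1|)))
          = ∑ k1 : ∀ i, Fin (L.m i), ∑ k2 : ∀ i, Fin (L.m i),
              cpl L z (insert j w) k1 k2 * (|Af L f (u ∪ z) d1 k1 k2|
                * |Ag L g (uᶜ ∪ insert j w) (d2.erase j) k2 k1|) := by
        refine Finset.sum_congr rfl fun k1 _ => ?_
        set Y : (∀ i, Fin (L.m i)) → ℝ := fun k2' =>
          cpl L z (insert j w) k1 k2' * (|Af L f (u ∪ z) d1 k1 k2'|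
            * |Ag L g (uᶜ ∪ insert j w) (d2.erase j) k2' k1|) with hYdef
        have hterm : ∀ k2 : ∀ i, Fin (L.m i),
            cpl L z w k1 k2 * (|Af L f (u ∪ z) d1 k1 k2|
              * (∑ l : Fin (L.m j),
                |Ag L g (uᶜ ∪ insert j w) (d2.erase j) (Function.update k2 j l) k1|))
            = (if k2 j = k1 j then (1:ℝ) else 0)
              * (∑ l : Fin (L.m j), Y (Function.update k2 j l)) := by
          intro k2
          have hY : ∀ l : Fin (L.m j), Y (Function.update k2 j l)
              = cpl L z (insert j w) k1 k2 * (|Af L f (u ∪ z) d1 k1 k2|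
                * |Ag L g (uᶜ ∪ insert j w) (d2.erase j) (Function.update k2 j l) k1|) := by
            intro l
            rw [hYdef]
            simp only
            rw [cpl_update_right L (Finset.mem_insert_self j w) k1 k2 l,
              Af_update_right L f (u ∪ z) d1 hjd1 k1 k2 l]
          rw [Finset.sum_congr rfl (fun l _ => hY l), cpl_split' L hjz hjw k1 k2,
            ← Finset.mul_sum, ← Finset.mul_sum]
          ring
        rw [Finset.sum_congr rfl (fun k2 _ => hterm k2),
          sum_diag_update j (k1 j) Y]
      -- nonnegativity
      have hnn1 : (0:ℝ) ≤ ∑ k1 : ∀ i, Fin (L.m i), ∑ k2 : ∀ i, Fin (L.m i),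
          cpl L z w k1 k2 * (|Af L f (u ∪ z) d1 k1 k2|
            * |Ag L g (uᶜ ∪ w) (d2.erase j) k2 k1|) :=
        Finset.sum_nonneg fun k1 _ => Finset.sum_nonneg fun k2 _ =>
          mul_nonneg (cpl_nonneg _ _ _ _ _) (mul_nonneg (abs_nonneg _) (abs_nonneg _))
      have hnn2 : (0:ℝ) ≤ ∑ k1 : ∀ i, Fin (L.m i), ∑ k2 : ∀ i, Fin (L.m i),
          cpl L z (insert j w) k1 k2 * (|Af L f (u ∪ z) d1 k1 k2|
            * |Ag L g (uᶜ ∪ insert j w) (d2.erase j) k2 k1|) :=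
        Finset.sum_nonneg fun k1 _ => Finset.sum_nonneg fun k2 _ =>
          mul_nonneg (cpl_nonneg _ _ _ _ _) (mul_nonneg (abs_nonneg _) (abs_nonneg _))
      -- apply induction hypothesis
      have hcard1 : d1.card + (d2.erase j).card = n := by
        have := Finset.card_erase_add_one hj
        omega
      have herase2 : d2.erase j ⊆ u := (Finset.erase_subset j d2).trans hd2
      have hdisj1 : Disjoint w (d2.erase j) :=
        hwd2.mono_right (Finset.erase_subset j d2)
      have hinsw : insert j w ⊆ u := Finset.insert_subset hju hw
      have hdisj2 : Disjoint (insert j w) (d2.erase j) := by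
        rw [Finset.disjoint_left]
        intro i hi hie
        rcases Finset.mem_insert.1 hi with rfl | hiw
        · exact (Finset.notMem_erase i d2) hie
        · exact (Finset.disjoint_left.1 hwd2 hiw) (Finset.mem_of_mem_erase hie)
      have hIH1 := ih z d1 w (d2.erase j) (by omega) hz hd1 hzd1 hw herase2 hdisj1
      have hIH2 := ih z d1 (insert j w) (d2.erase j) (by omega) hz hd1 hzd1 hinsw
        herase2 hdisj2
      -- combine
      calc ENNReal.ofReal (∑ k1 : ∀ i, Fin (L.m i), ∑ k2 : ∀ i, Fin (L.m i),
            cpl L z w k1 k2 * (|Af L f (u ∪ z) d1 k1 k2| * |Ag L g (uᶜ ∪ w) d2 k2 k1|))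
          ≤ ENNReal.ofReal ((∑ k1 : ∀ i, Fin (L.m i), ∑ k2 : ∀ i, Fin (L.m i),
              cpl L z w k1 k2 * (|Af L f (u ∪ z) d1 k1 k2|
                * |Ag L g (uᶜ ∪ w) (d2.erase j) k2 k1|))
            + (∑ k1 : ∀ i, Fin (L.m i), ∑ k2 : ∀ i, Fin (L.m i),
              cpl L z (insert j w) k1 k2 * (|Af L f (u ∪ z) d1 k1 k2|
                * |Ag L g (uᶜ ∪ insert j w) (d2.erase j) k2 k1|))) := by
            refine ENNReal.ofReal_le_ofReal ?_
            rw [← hreidx]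
            exact hsum1
        _ = ENNReal.ofReal (∑ k1 : ∀ i, Fin (L.m i), ∑ k2 : ∀ i, Fin (L.m i),
              cpl L z w k1 k2 * (|Af L f (u ∪ z) d1 k1 k2|
                * |Ag L g (uᶜ ∪ w) (d2.erase j) k2 k1|))
            + ENNReal.ofReal (∑ k1 : ∀ i, Fin (L.m i), ∑ k2 : ∀ i, Fin (L.m i),
              cpl L z (insert j w) k1 k2 * (|Af L f (u ∪ z) d1 k1 k2|
                * |Ag L g (uᶜ ∪ insert j w) (d2.erase j) k2 k1|)) :=
            ENNReal.ofReal_add hnn1 hnn2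
        _ ≤ (∑ z' ∈ d1.powerset, Vface f (u ∪ z ∪ z'))
              * (∑ w' ∈ (d2.erase j).powerset, Vface g (uᶜ ∪ w ∪ w'))
            + (∑ z' ∈ d1.powerset, Vface f (u ∪ z ∪ z'))
              * (∑ w' ∈ (d2.erase j).powerset, Vface g (uᶜ ∪ insert j w ∪ w')) :=
            add_le_add hIH1 hIH2
        _ = (∑ z' ∈ d1.powerset, Vface f (u ∪ z ∪ z'))
              * (∑ w' ∈ d2.powerset, Vface g (uᶜ ∪ w ∪ w')) := by
            rw [← mul_add]
            congr 1
            conv_rhs => rw [show d2 = insert j (d2.erase j) from (Finset.insert_erase hj).symm]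
            rw [Finset.sum_powerset_insert (Finset.notMem_erase j d2)]
            congr 1
            refine Finset.sum_congr rfl fun w' hw' => ?_
            have hseteq : uᶜ ∪ w ∪ insert j w' = uᶜ ∪ insert j w ∪ w' := by
              ext i
              simp only [Finset.mem_union, Finset.mem_insert]
              tauto
            rw [hseteq]
    · -- f-side step
      obtain ⟨j, hj⟩ := hne
      have hju : j ∉ u := by
        have := hd1 hj; simpa [Finset.mem_compl] using this
      have hjz : j ∉ z := fun h => (Finset.disjoint_left.1 hzd1 h) hj
      have hjw : j ∉ w := fun h => hju (hw h)
      have hjd2 : j ∉ d2 := fun h => hju (hd2 h)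
      have hpt : ∀ k1 k2 : ∀ i, Fin (L.m i),
          cpl L z w k1 k2 * (|Af L f (u ∪ z) d1 k1 k2| * |Ag L g (uᶜ ∪ w) d2 k2 k1|)
          ≤ cpl L z w k1 k2 * (|Af L f (u ∪ z) (d1.erase j) k1 k2|
              * |Ag L g (uᶜ ∪ w) d2 k2 k1|)
            + cpl L z w k1 k2 * ((∑ l : Fin (L.m j),
                |Af L f (u ∪ insert j z) (d1.erase j) (Function.update k1 j l) k2|)
              * |Ag L g (uᶜ ∪ w) d2 k2 k1|) := by
        intro k1 k2
        have h0 := Af_tel L f u z d1 hz hd1 hzd1 hj k1 k2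
        calc cpl L z w k1 k2 * (|Af L f (u ∪ z) d1 k1 k2| * |Ag L g (uᶜ ∪ w) d2 k2 k1|)
            ≤ cpl L z w k1 k2 * ((|Af L f (u ∪ z) (d1.erase j) k1 k2|
                + ∑ l : Fin (L.m j),
                  |Af L f (u ∪ insert j z) (d1.erase j) (Function.update k1 j l) k2|)
              * |Ag L g (uᶜ ∪ w) d2 k2 k1|) := by
              refine mul_le_mul_of_nonneg_left ?_ (cpl_nonneg L z w k1 k2)
              exact mul_le_mul_of_nonneg_right h0 (abs_nonneg _)
          _ = _ := by ring
      have hsum1 : (∑ k1 : ∀ i, Fin (L.m i), ∑ k2 : ∀ i, Fin (L.m i),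
          cpl L z w k1 k2 * (|Af L f (u ∪ z) d1 k1 k2| * |Ag L g (uᶜ ∪ w) d2 k2 k1|))
          ≤ (∑ k1 : ∀ i, Fin (L.m i), ∑ k2 : ∀ i, Fin (L.m i),
              cpl L z w k1 k2 * (|Af L f (u ∪ z) (d1.erase j) k1 k2|
                * |Ag L g (uᶜ ∪ w) d2 k2 k1|))
            + (∑ k1 : ∀ i, Fin (L.m i), ∑ k2 : ∀ i, Fin (L.m i),
              cpl L z w k1 k2 * ((∑ l : Fin (L.m j),
                  |Af L f (u ∪ insert j z) (d1.erase j) (Function.update k1 j l) k2|)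
                * |Ag L g (uᶜ ∪ w) d2 k2 k1|)) := by
        rw [← Finset.sum_add_distrib]
        refine Finset.sum_le_sum fun k1 _ => ?_
        rw [← Finset.sum_add_distrib]
        exact Finset.sum_le_sum fun k2 _ => hpt k1 k2
      have hreidx : (∑ k1 : ∀ i, Fin (L.m i), ∑ k2 : ∀ i, Fin (L.m i),
            cpl L z w k1 k2 * ((∑ l : Fin (L.m j),
                |Af L f (u ∪ insert j z) (d1.erase j) (Function.update k1 j l) k2|)
              * |Ag L g (uᶜ ∪ w) d2 k2 k1|))
          = ∑ k1 : ∀ i, Fin (L.m i), ∑ k2 : ∀ i, Fin (L.m i),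
              cpl L (insert j z) w k1 k2 * (|Af L f (u ∪ insert j z) (d1.erase j) k1 k2|
                * |Ag L g (uᶜ ∪ w) d2 k2 k1|) := by
        rw [Finset.sum_comm]
        rw [show (∑ k1 : ∀ i, Fin (L.m i), ∑ k2 : ∀ i, Fin (L.m i),
            cpl L (insert j z) w k1 k2 * (|Af L f (u ∪ insert j z) (d1.erase j) k1 k2|
              * |Ag L g (uᶜ ∪ w) d2 k2 k1|))
          = ∑ k2 : ∀ i, Fin (L.m i), ∑ k1 : ∀ i, Fin (L.m i),
            cpl L (insert j z) w k1 k2 * (|Af L f (u ∪ insert j z) (d1.erase j) k1 k2|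
              * |Ag L g (uᶜ ∪ w) d2 k2 k1|) from Finset.sum_comm]
        refine Finset.sum_congr rfl fun k2 _ => ?_
        set Y : (∀ i, Fin (L.m i)) → ℝ := fun k1' =>
          cpl L (insert j z) w k1' k2 * (|Af L f (u ∪ insert j z) (d1.erase j) k1' k2|
            * |Ag L g (uᶜ ∪ w) d2 k2 k1'|) with hYdef
        have hterm : ∀ k1 : ∀ i, Fin (L.m i),
            cpl L z w k1 k2 * ((∑ l : Fin (L.m j),
                |Af L f (u ∪ insert j z) (d1.erase j) (Function.update k1 j l) k2|)
              * |Ag L g (uᶜ ∪ w) d2 k2 k1|)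
            = (if k1 j = k2 j then (1:ℝ) else 0)
              * (∑ l : Fin (L.m j), Y (Function.update k1 j l)) := by
          intro k1
          have hY : ∀ l : Fin (L.m j), Y (Function.update k1 j l)
              = cpl L (insert j z) w k1 k2
                * (|Af L f (u ∪ insert j z) (d1.erase j) (Function.update k1 j l) k2|
                  * |Ag L g (uᶜ ∪ w) d2 k2 k1|) := by
            intro l
            rw [hYdef]
            simp only
            rw [cpl_update_left L (Finset.mem_insert_self j z) k1 k2 l,
              Ag_update_left L g (uᶜ ∪ w) d2 hjd2 k2 k1 l]
          rw [Finset.sum_congr rfl (fun l _ => hY l), cpl_split L hjz hjw k1 k2,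
            ← Finset.mul_sum, ← Finset.sum_mul]
          ring
        rw [Finset.sum_congr rfl (fun k1 _ => hterm k1),
          sum_diag_update j (k2 j) Y]
      have hnn1 : (0:ℝ) ≤ ∑ k1 : ∀ i, Fin (L.m i), ∑ k2 : ∀ i, Fin (L.m i),
          cpl L z w k1 k2 * (|Af L f (u ∪ z) (d1.erase j) k1 k2|
            * |Ag L g (uᶜ ∪ w) d2 k2 k1|) :=
        Finset.sum_nonneg fun k1 _ => Finset.sum_nonneg fun k2 _ =>
          mul_nonneg (cpl_nonneg _ _ _ _ _) (mul_nonneg (abs_nonneg _) (abs_nonneg _))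
      have hnn2 : (0:ℝ) ≤ ∑ k1 : ∀ i, Fin (L.m i), ∑ k2 : ∀ i, Fin (L.m i),
          cpl L (insert j z) w k1 k2 * (|Af L f (u ∪ insert j z) (d1.erase j) k1 k2|
            * |Ag L g (uᶜ ∪ w) d2 k2 k1|) :=
        Finset.sum_nonneg fun k1 _ => Finset.sum_nonneg fun k2 _ =>
          mul_nonneg (cpl_nonneg _ _ _ _ _) (mul_nonneg (abs_nonneg _) (abs_nonneg _))
      have herase1 : d1.erase j ⊆ uᶜ := (Finset.erase_subset j d1).trans hd1
      have hdisj1 : Disjoint z (d1.erase j) :=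
        hzd1.mono_right (Finset.erase_subset j d1)
      have hinsz : insert j z ⊆ uᶜ := Finset.insert_subset (hd1 hj) hz
      have hdisj2 : Disjoint (insert j z) (d1.erase j) := by
        rw [Finset.disjoint_left]
        intro i hi hie
        rcases Finset.mem_insert.1 hi with rfl | hiz
        · exact (Finset.notMem_erase i d1) hie
        · exact (Finset.disjoint_left.1 hzd1 hiz) (Finset.mem_of_mem_erase hie)
      have hcard1 : (d1.erase j).card + d2.card = n := by
        have := Finset.card_erase_add_one hj
        omega
      have hIH1 := ih z (d1.erase j) w d2 (by omega) hz herase1 hdisj1 hw hd2 hwd2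
      have hIH2 := ih (insert j z) (d1.erase j) w d2 (by omega) hinsz herase1 hdisj2
        hw hd2 hwd2
      calc ENNReal.ofReal (∑ k1 : ∀ i, Fin (L.m i), ∑ k2 : ∀ i, Fin (L.m i),
            cpl L z w k1 k2 * (|Af L f (u ∪ z) d1 k1 k2| * |Ag L g (uᶜ ∪ w) d2 k2 k1|))
          ≤ ENNReal.ofReal ((∑ k1 : ∀ i, Fin (L.m i), ∑ k2 : ∀ i, Fin (L.m i),
              cpl L z w k1 k2 * (|Af L f (u ∪ z) (d1.erase j) k1 k2|
                * |Ag L g (uᶜ ∪ w) d2 k2 k1|))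
            + (∑ k1 : ∀ i, Fin (L.m i), ∑ k2 : ∀ i, Fin (L.m i),
              cpl L (insert j z) w k1 k2 * (|Af L f (u ∪ insert j z) (d1.erase j) k1 k2|
                * |Ag L g (uᶜ ∪ w) d2 k2 k1|))) := by
            refine ENNReal.ofReal_le_ofReal ?_
            rw [← hreidx]
            exact hsum1
        _ = ENNReal.ofReal (∑ k1 : ∀ i, Fin (L.m i), ∑ k2 : ∀ i, Fin (L.m i),
              cpl L z w k1 k2 * (|Af L f (u ∪ z) (d1.erase j) k1 k2|
                * |Ag L g (uᶜ ∪ w) d2 k2 k1|))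
            + ENNReal.ofReal (∑ k1 : ∀ i, Fin (L.m i), ∑ k2 : ∀ i, Fin (L.m i),
              cpl L (insert j z) w k1 k2 * (|Af L f (u ∪ insert j z) (d1.erase j) k1 k2|
                * |Ag L g (uᶜ ∪ w) d2 k2 k1|)) :=
            ENNReal.ofReal_add hnn1 hnn2
        _ ≤ (∑ z' ∈ (d1.erase j).powerset, Vface f (u ∪ z ∪ z'))
              * (∑ w' ∈ d2.powerset, Vface g (uᶜ ∪ w ∪ w'))
            + (∑ z' ∈ (d1.erase j).powerset, Vface f (u ∪ insert j z ∪ z'))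
              * (∑ w' ∈ d2.powerset, Vface g (uᶜ ∪ w ∪ w')) :=
            add_le_add hIH1 hIH2
        _ = (∑ z' ∈ d1.powerset, Vface f (u ∪ z ∪ z'))
              * (∑ w' ∈ d2.powerset, Vface g (uᶜ ∪ w ∪ w')) := by
            rw [← add_mul]
            congr 1
            conv_rhs => rw [show d1 = insert j (d1.erase j) from (Finset.insert_erase hj).symm]
            rw [Finset.sum_powerset_insert (Finset.notMem_erase j d1)]
            congr 1
            refine Finset.sum_congr rfl fun z' hz' => ?_
            have hseteq : u ∪ z ∪ insert j z' = u ∪ insert j z ∪ z' := by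
              ext i
              simp only [Finset.mem_union, Finset.mem_insert]
              tauto
            rw [hseteq]

end GrandMain

lemma vitali_prod {ι : Type*} [Fintype ι] [DecidableEq ι] (f g : (ι → ℝ) → ℝ)
    (hf : ∀ s : Finset ι, Vface f s ≠ ⊤) (hg : ∀ s : Finset ι, Vface g s ≠ ⊤) :
    vitaliVar (fun x => f x * g x) 0 1 ≠ ⊤ := by
  classical
  have hMne : (∑ u : Finset ι,
      (∑ z' ∈ uᶜ.powerset, Vface f (u ∪ ∅ ∪ z'))
        * (∑ w' ∈ u.powerset, Vface g (uᶜ ∪ ∅ ∪ w'))) ≠ ⊤ := by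
    intro htop
    obtain ⟨u, _, hu⟩ := ENNReal.sum_eq_top.1 htop
    rcases ENNReal.mul_eq_top.1 hu with ⟨_, h2⟩ | ⟨h1, _⟩
    · obtain ⟨w', _, hw'⟩ := ENNReal.sum_eq_top.1 h2
      exact hg _ hw'
    · obtain ⟨z', _, hz'⟩ := ENNReal.sum_eq_top.1 h1
      exact hf _ hz'
  refine ne_top_of_le_ne_top hMne ?_
  refine iSup_le fun L => ?_
  -- pointwise bound per cell
  have hptk : ∀ k : ∀ i, Fin (L.m i),
      |altSum (fun x => f x * g x) (fun j => L.pts j (k j).castSucc)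
          (fun j => L.pts j (k j).succ)|
      ≤ ∑ u : Finset ι, |Af L f (u ∪ ∅) uᶜ k k| * |Ag L g (uᶜ ∪ ∅) u k k| := by
    intro k
    rw [show (fun j => L.pts j (k j).castSucc) = cellLo L k from rfl,
      show (fun j => L.pts j (k j).succ) = cellUp L k from rfl,
      prod_rule f g (cellLo L k) (cellUp L k)]
    refine le_trans (Finset.abs_sum_le_sum_abs _ _) (le_of_eq ?_)
    refine Finset.sum_congr rfl fun u _ => ?_
    rw [abs_mul]
    have h1 : Af L f (u ∪ ∅) uᶜ k k = E f u (cellLo L k) (cellUp L k) := by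
      rw [show Af L f (u ∪ ∅) uᶜ k k
          = E f (u ∪ ∅) (cellLo L k) (Bpat L (u ∪ ∅) uᶜ k k) from rfl,
        Finset.union_empty]
      congr 1
      funext i
      unfold Bpat
      by_cases hi : i ∈ u
      · rw [if_pos hi]
      · rw [if_neg hi, if_pos (Finset.mem_compl.2 hi)]
    have h2 : Ag L g (uᶜ ∪ ∅) u k k
        = E g uᶜ (cellLo L k) (fun j => if j ∈ u then cellLo L k j else cellUp L k j) := by
      rw [show Ag L g (uᶜ ∪ ∅) u k k
          = E g (uᶜ ∪ ∅) (cellLo L k) (BpatG L (uᶜ ∪ ∅) u k k) from rfl,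
        Finset.union_empty]
      congr 1
      funext i
      unfold BpatG
      by_cases hi : i ∈ u
      · rw [if_neg (by simp [Finset.mem_compl, hi]), if_pos hi, if_pos hi]
      · rw [if_pos (Finset.mem_compl.2 hi), if_neg hi]
    rw [h1, h2]
  -- diagonal identity
  have hdiag : ∀ u : Finset ι,
      (∑ k1 : ∀ i, Fin (L.m i), ∑ k2 : ∀ i, Fin (L.m i),
        cpl L ∅ ∅ k1 k2 * (|Af L f (u ∪ ∅) uᶜ k1 k2| * |Ag L g (uᶜ ∪ ∅) u k2 k1|))
      = ∑ k : ∀ i, Fin (L.m i), |Af L f (u ∪ ∅) uᶜ k k| * |Ag L g (uᶜ ∪ ∅) u k k| := by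
    intro u
    refine Finset.sum_congr rfl fun k1 _ => ?_
    have hc : ∀ k2 : ∀ i, Fin (L.m i),
        cpl L ∅ ∅ k1 k2 * (|Af L f (u ∪ ∅) uᶜ k1 k2| * |Ag L g (uᶜ ∪ ∅) u k2 k1|)
        = if k1 = k2 then |Af L f (u ∪ ∅) uᶜ k1 k2| * |Ag L g (uᶜ ∪ ∅) u k2 k1| else 0 := by
      intro k2
      by_cases h : k1 = k2
      · rw [if_pos h]
        unfold cpl
        rw [ind_pos (fun i _ _ => congrFun h i), one_mul]
      · rw [if_neg h]
        unfold cpl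
        rw [ind_neg (fun hall => h (funext fun i =>
          hall i (Finset.notMem_empty i) (Finset.notMem_empty i))), zero_mul]
    rw [Finset.sum_congr rfl (fun k2 _ => hc k2), Finset.sum_ite_eq]
    rw [if_pos (Finset.mem_univ k1)]
  -- chain
  calc ENNReal.ofReal (L.varSum (fun x => f x * g x))
      ≤ ENNReal.ofReal (∑ u : Finset ι,
          ∑ k1 : ∀ i, Fin (L.m i), ∑ k2 : ∀ i, Fin (L.m i),
            cpl L ∅ ∅ k1 k2 * (|Af L f (u ∪ ∅) uᶜ k1 k2| * |Ag L g (uᶜ ∪ ∅) u k2 k1|)) := by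
        refine ENNReal.ofReal_le_ofReal ?_
        calc L.varSum (fun x => f x * g x)
            ≤ ∑ k : ∀ i, Fin (L.m i), ∑ u : Finset ι,
                |Af L f (u ∪ ∅) uᶜ k k| * |Ag L g (uᶜ ∪ ∅) u k k| :=
              Finset.sum_le_sum fun k _ => hptk k
          _ = ∑ u : Finset ι, ∑ k : ∀ i, Fin (L.m i),
                |Af L f (u ∪ ∅) uᶜ k k| * |Ag L g (uᶜ ∪ ∅) u k k| := Finset.sum_comm
          _ = ∑ u : Finset ι, ∑ k1 : ∀ i, Fin (L.m i), ∑ k2 : ∀ i, Fin (L.m i),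
                cpl L ∅ ∅ k1 k2 * (|Af L f (u ∪ ∅) uᶜ k1 k2|
                  * |Ag L g (uᶜ ∪ ∅) u k2 k1|) := by
              exact Finset.sum_congr rfl fun u _ => (hdiag u).symm
    _ = ∑ u : Finset ι, ENNReal.ofReal
          (∑ k1 : ∀ i, Fin (L.m i), ∑ k2 : ∀ i, Fin (L.m i),
            cpl L ∅ ∅ k1 k2 * (|Af L f (u ∪ ∅) uᶜ k1 k2| * |Ag L g (uᶜ ∪ ∅) u k2 k1|)) := by
        refine ENNReal.ofReal_sum_of_nonneg fun u _ => ?_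
        exact Finset.sum_nonneg fun k1 _ => Finset.sum_nonneg fun k2 _ =>
          mul_nonneg (cpl_nonneg _ _ _ _ _) (mul_nonneg (abs_nonneg _) (abs_nonneg _))
    _ ≤ ∑ u : Finset ι,
          (∑ z' ∈ uᶜ.powerset, Vface f (u ∪ ∅ ∪ z'))
            * (∑ w' ∈ u.powerset, Vface g (uᶜ ∪ ∅ ∪ w')) := by
        refine Finset.sum_le_sum fun u _ => ?_
        exact grand L f g u (uᶜ.card + u.card) ∅ uᶜ ∅ u rfl
          (Finset.empty_subset _) subset_rfl (Finset.disjoint_empty_left _)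
          (Finset.empty_subset _) subset_rfl (Finset.disjoint_empty_left _)

theorem stmt4' (q : ℕ) (f g : (Fin q → ℝ) → ℝ)
    (hf : hkVar f 0 1 ≠ ⊤) (hg : hkVar g 0 1 ≠ ⊤) :
    hkVar (fun x => f x * g x) 0 1 ≠ ⊤ := by
  classical
  have key : ∀ u : Finset (Fin q),
      vitaliVar (fixOutside u (1 : Fin q → ℝ) (fun x => f x * g x))
        (fun j : {x // x ∈ u} => (0 : Fin q → ℝ) j) (fun j : {x // x ∈ u} => (1 : Fin q → ℝ) j)
        ≠ ⊤ := by
    intro u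
    have hface : ∀ (h : (Fin q → ℝ) → ℝ), hkVar h 0 1 ≠ ⊤ →
        ∀ s' : Finset {x // x ∈ u}, Vface (fixOutside u (1 : Fin q → ℝ) h) s' ≠ ⊤ := by
      intro h hh s'
      rcases s'.eq_empty_or_nonempty with rfl | hne
      · haveI : IsEmpty {x : {j // j ∈ u} // x ∈ (∅ : Finset {j // j ∈ u})} :=
          ⟨fun x => (Finset.notMem_empty _ x.2)⟩
        exact vitaliVar_ne_top_of_isEmpty _ _ _
      · have h2 : Vface (fixOutside u (1 : Fin q → ℝ) h) s'
            = vitaliVar (fixOutside (s'.map (Function.Embedding.subtype _)) (1 : Fin q → ℝ) h)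
              (fun _ => (0:ℝ)) (fun _ => (1:ℝ)) := vitaliVar_subtype_subtype u s' h
        rw [h2]
        intro htop
        have hmemf : s'.map (Function.Embedding.subtype _)
            ∈ Finset.univ.powerset.filter (fun t : Finset (Fin q) => t.Nonempty) :=
          Finset.mem_filter.2 ⟨Finset.mem_powerset.2 (Finset.subset_univ _), hne.map⟩
        exact hh (ENNReal.sum_eq_top.2 ⟨_, hmemf, htop⟩)
    exact vitali_prod (fixOutside u (1 : Fin q → ℝ) f) (fixOutside u (1 : Fin q → ℝ) g)
      (hface f hf) (hface g hg)
  intro htop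
  obtain ⟨u, _, hu⟩ := ENNReal.sum_eq_top.1 htop
  exact key u hu

/-- The product of two bounded functions of finite Hardy–Krause variation on
`[0,1]^q` has finite Hardy–Krause variation. -/
theorem stmt4 (q : ℕ) (f g : (Fin q → ℝ) → ℝ)
    (hf : hkVar f 0 1 ≠ ⊤) (hg : hkVar g 0 1 ≠ ⊤)
    (hfb : ∃ C : ℝ, ∀ x ∈ Set.Icc (0 : Fin q → ℝ) 1, |f x| ≤ C)
    (hgb : ∃ C : ℝ, ∀ x ∈ Set.Icc (0 : Fin q → ℝ) 1, |g x| ≤ C) :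
    hkVar (fun x => f x * g x) 0 1 ≠ ⊤ := by
  exact stmt4' q f g hf hg
end EDef
end
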